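/- arXiv:1406.6440 — 3 statements merged into one kernel-verified Lean document; each statement's English description precedes it below -/
import Mathlib

section
/- Let 2 ≤ k ≤ n and 0 ≤ r ≤ n, and let C be a division of {1,...,n} with |C| = (0^{k-2}, r, n-r, 0^{n-k}), i.e., C_{k-1} = {1,...,r} and C_k = {r+1,...,n}. Then a permutation w = w_1...w_n of {1,...,n} is a C-permutation if and only if the sequence r + 1/2, w_1, w_2, ..., w_n has exactly k-1 descents. Consequently, the number of C-permutations equals the number of permutations v ∈ S_{n+1} with k-1 descents and v(1) = r+1. -/
open scoped Pointwise
open MeasureTheory Nat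

namespace MixedEulerian

/-- A division of a finite set `S` into an ordered sequence of blocks,
with all elements of earlier blocks strictly smaller than those of later blocks. -/
def IsDivision (C : List (Finset ℕ)) (S : Finset ℕ) : Prop :=
  (∀ s ∈ S, ∃ i, i < C.length ∧ s ∈ C.getD i ∅) ∧
  (∀ i, i < C.length → C.getD i ∅ ⊆ S) ∧
  (∀ i j, i < j → j < C.length →
    ∀ s ∈ C.getD i ∅, ∀ t ∈ C.getD j ∅, s < t)

/-- Type A admissibility: `s ∈ C_i` is admissible iff `s = min C₁`, `s = max C_n`,
or `i` is strictly between the first and the last index. (Indices are 0-based.) -/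
def AdmissibleA (C : List (Finset ℕ)) (s : ℕ) : Prop :=
  ∃ i, i < C.length ∧ s ∈ C.getD i ∅ ∧
    ((i = 0 ∧ ∀ t ∈ C.getD 0 ∅, s ≤ t) ∨
     (i = C.length - 1 ∧ ∀ t ∈ C.getD i ∅, t ≤ s) ∨
     (0 < i ∧ i + 1 < C.length))

/-- Type A deletion of `s` from the division `C`. -/
def deleteA (C : List (Finset ℕ)) (s : ℕ) : List (Finset ℕ) :=
  let i := C.findIdx (fun b => decide (s ∈ b))
  let B := C.getD i ∅
  let lo := B.filter (fun t => t < s)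
  let hi := B.filter (fun t => s < t)
  if C.length ≤ 1 then []
  else if i = 0 then (hi ∪ C.getD 1 ∅) :: C.drop 2
  else if i = C.length - 1 then C.take (i - 1) ++ [C.getD (i - 1) ∅ ∪ lo]
  else C.take (i - 1) ++ [C.getD (i - 1) ∅ ∪ lo, hi ∪ C.getD (i + 1) ∅] ++ C.drop (i + 2)

/-- `w` is a (type A) `C`-permutation: each entry is admissible in the division
obtained by deleting the previous entries, and all elements get deleted. -/
def IsCPermA : List (Finset ℕ) → List ℕ → Prop
  | C, [] => ∀ B ∈ C, B = ∅
  | C, s :: w => AdmissibleA C s ∧ IsCPermA (deleteA C s) w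

/-- Type B admissibility: `s ∈ C_i` is admissible iff `s = min C₁` or `i ≠ 0`. -/
def AdmissibleB (C : List (Finset ℕ)) (s : ℕ) : Prop :=
  ∃ i, i < C.length ∧ s ∈ C.getD i ∅ ∧
    ((i = 0 ∧ ∀ t ∈ C.getD 0 ∅, s ≤ t) ∨ i ≠ 0)

/-- Type B deletion of `s` from the division `C`. -/
def deleteB (C : List (Finset ℕ)) (s : ℕ) : List (Finset ℕ) :=
  let i := C.findIdx (fun b => decide (s ∈ b))
  if i = C.length - 1 ∧ 0 < i then
    C.take (i - 1) ++ [C.getD (i - 1) ∅ ∪ ((C.getD i ∅).erase s)]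
  else deleteA C s

/-- `w` is a type B `C`-permutation. -/
def IsCPermB : List (Finset ℕ) → List ℕ → Prop
  | C, [] => ∀ B ∈ C, B = ∅
  | C, s :: w => AdmissibleB C s ∧ IsCPermB (deleteB C s) w

/-- A sequence of elements that can be successively (type A) deleted from `C`. -/
def AdmissibleSeqA : List (Finset ℕ) → List ℕ → Prop
  | _, [] => True
  | C, s :: w => AdmissibleA C s ∧ AdmissibleSeqA (deleteA C s) w

/-- Number of descents of a list: the number of adjacent pairs that decrease. -/
def listDescents {α : Type*} [LinearOrder α] (l : List α) : ℕ :=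
  (l.zip l.tail).countP (fun p => decide (p.2 < p.1))

/-- Eulerian number `A(n,k)`: permutations of `{1,…,n}` with exactly `k-1` descents. -/
def eulerianA (n k : ℕ) : ℕ :=
  (List.range' 1 n).permutations.countP (fun l => decide (listDescents l = k - 1))

/-- `A(m,t;r)`: permutations of `{1,…,m+1}` with `t-1` descents and first entry `r+1`
(declared to be `0` when `t = 0`; it vanishes automatically when `t > m+1`). -/
def eulerianFirst (m t r : ℕ) : ℕ :=
  if t = 0 then 0 else
    (List.range' 1 (m + 1)).permutations.countP
      (fun l => decide (listDescents l = t - 1 ∧ l.headI = r + 1))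

/-- The index of `t` in the `C`-permutation `w`: the (1-based) position of the block
containing `t` just before `t` is deleted. -/
def indexFn (C : List (Finset ℕ)) : List ℕ → ℕ → ℕ
  | [], _ => 0
  | s :: w, t =>
      if t = s then C.findIdx (fun b => decide (t ∈ b)) + 1
      else indexFn (deleteA C s) w t

/-- An index function of `C`: any function sending each element of `C_i` into `{1,…,i}`
(1-based). -/
def IsIndexFn (C : List (Finset ℕ)) (I : ℕ → ℕ) : Prop :=
  ∀ i, i < C.length → ∀ s ∈ C.getD i ∅, 1 ≤ I s ∧ I s ≤ i + 1

/-- `C` is superdiagonal: `|C₁| + ⋯ + |C_i| ≥ i` for all `i`. -/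
def Superdiagonal (C : List (Finset ℕ)) : Prop :=
  ∀ i, i ≤ C.length → i ≤ ∑ j ∈ Finset.range i, (C.getD j ∅).card

/-- `C` is subdiagonal: `|C_n| + ⋯ + |C_{n-i+1}| ≥ i` for all `i`. -/
def Subdiagonal (C : List (Finset ℕ)) : Prop :=
  ∀ i, i ≤ C.length → i ≤ ∑ j ∈ Finset.range i, (C.getD (C.length - 1 - j) ∅).card

/-- The canonical division of `{1,…,c.sum}` with block sizes given by `c`. -/
def divisionOf (c : List ℕ) : List (Finset ℕ) :=
  (List.range c.length).map (fun i => Finset.Ioc ((c.take i).sum) ((c.take (i + 1)).sum))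

/-- The number of `C`-permutations for a division with block sizes `c`. -/
noncomputable def NPerm (c : List ℕ) : ℕ :=
  Nat.card {w : List ℕ // IsCPermA (divisionOf c) w}

/-- The division of `{1,…,n}` with all elements in (1-based) position `k`. -/
def midDivision (n k : ℕ) : List (Finset ℕ) :=
  List.replicate (k - 1) ∅ ++ [Finset.Icc 1 n] ++ List.replicate (n - k) ∅

/-- The hypersimplex `Δ_{k,n} ⊆ ℝ^{n+1}`. -/
def hypersimplex (n k : ℕ) : Set (Fin (n + 1) → ℝ) :=
  convexHull ℝ {x | ∃ T : Finset (Fin (n + 1)), T.card = k ∧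
    x = fun i => if i ∈ T then (1 : ℝ) else 0}

/-- The permutohedron `P(y₁,…,y_m) ⊆ ℝ^m`. -/
def permutohedron {m : ℕ} (y : Fin m → ℝ) : Set (Fin m → ℝ) :=
  convexHull ℝ {x | ∃ w : Equiv.Perm (Fin m), x = y ∘ w}

/-- The polytope `Γ_{k,n} ⊆ ℝ^n`, the convex hull of all `±e_{i₁} ± ⋯ ± e_{i_k}`. -/
def gammaPolytope (n k : ℕ) : Set (Fin n → ℝ) :=
  convexHull ℝ {x | ∃ T : Finset (Fin n), T.card = k ∧ ∃ ε : Fin n → ℝ,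
    (∀ i, ε i = 1 ∨ ε i = -1) ∧ x = fun i => if i ∈ T then ε i else 0}

/-- The signed permutohedron `SP(y₁,…,y_n) ⊆ ℝ^n`. -/
def signedPermutohedron {m : ℕ} (y : Fin m → ℝ) : Set (Fin m → ℝ) :=
  convexHull ℝ {x | ∃ w : Equiv.Perm (Fin m), ∃ ε : Fin m → ℝ,
    (∀ i, ε i = 1 ∨ ε i = -1) ∧ x = fun i => ε i * y (w i)}

/-!
Write `C = (∅^q, A, B, ∅^e)` with `|A ∪ B| = q + e + 2` and choose a threshold `A < μ < B`.
Deleting an admissible `s ∈ A` (resp. `s ∈ B`) leaves a division of the same shape on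
`(A ∪ B) \ {s}`, with threshold `s` and `q` (resp. `e`) lowered by one; correspondingly the
comparison of `μ` with `s` is a descent exactly when `s ∈ A`. At the ends (`q = 0`, resp.
`e = 0`) only `min A` (resp. `max B`) is admissible, and these are precisely the choices of `s`
for which `μ, s, …` can still have `q + 1` descents. By induction on `w`, the `C`-permutations
are the enumerations `w` of `A ∪ B` for which `μ, w` has `q + 1` descents. For the count,
relabel `w` monotonically so as to skip the value `r + 1`, and prepend `r + 1`.
-/

section Descents

variable {α β : Type*} [LinearOrder α] [LinearOrder β]

theorem listDescents_singleton (a : α) : listDescents [a] = 0 := rfl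

theorem listDescents_cons_cons (a b : α) (l : List α) :
    listDescents (a :: b :: l) = (if b < a then 1 else 0) + listDescents (b :: l) := by
  simp only [listDescents, List.tail_cons, List.zip_cons_cons, List.countP_cons]
  split_ifs <;> simp_all [add_comm]

theorem listDescents_cons_le_length (a : α) (l : List α) : listDescents (a :: l) ≤ l.length :=
  List.countP_le_length.trans (by simp)

theorem listDescents_map_of_strictMono {f : α → β} (hf : StrictMono f) (l : List α) :
    listDescents (l.map f) = listDescents l := by
  induction l with
  | nil => rfl
  | cons a l ih =>
    cases l with
    | nil => rfl
    | cons b l =>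
      simp only [List.map_cons] at ih ⊢
      rw [listDescents_cons_cons, listDescents_cons_cons, ih]
      simp only [hf.lt_iff_lt]

theorem listDescents_cons_of_forall_le {a : α} {l : List α} (h : ∀ b ∈ l, a ≤ b) :
    listDescents (a :: l) = listDescents l := by
  cases l with
  | nil => rfl
  | cons b l => rw [listDescents_cons_cons, if_neg (h b (by simp)).not_gt, zero_add]

theorem listDescents_cons_of_forall_lt {a : α} {l : List α} (hl : l ≠ [])
    (h : ∀ b ∈ l, b < a) :
    listDescents (a :: l) = listDescents l + 1 := by
  cases l with
  | nil => contradiction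
  | cons b l => rw [listDescents_cons_cons, if_pos (h b (by simp)), add_comm]

theorem one_le_listDescents_cons {a b : α} {l : List α} (hb : b ∈ l) (hba : b < a) :
    1 ≤ listDescents (a :: l) := by
  induction l generalizing a with
  | nil => simp at hb
  | cons c l ih =>
    rw [listDescents_cons_cons]
    by_cases hca : c < a
    · rw [if_pos hca]; omega
    · have hbl : b ∈ l := (List.mem_cons.1 hb).resolve_left (by rintro rfl; exact hca hba)
      have := ih hbl (hba.trans_le (not_lt.1 hca))
      omega

theorem listDescents_cons_lt_length {a b : α} {l : List α} (hb : b ∈ l) (hab : a < b) :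
    listDescents (a :: l) < l.length := by
  induction l generalizing a with
  | nil => simp at hb
  | cons c l ih =>
    rw [listDescents_cons_cons, List.length_cons]
    by_cases hca : c < a
    · have hbl : b ∈ l :=
        (List.mem_cons.1 hb).resolve_left (by rintro rfl; exact lt_asymm hab hca)
      have := ih hbl (hca.trans hab)
      rw [if_pos hca]; omega
    · have := listDescents_cons_le_length c l
      rw [if_neg hca]; omega

end Descents

section CoeEqVal

variable {α : Type*} {s : α} {w : List α} {S : Finset α}

theorem mem_iff_mem_of_coe_eq_val (hw : (w : Multiset α) = S.val) {x : α} :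
    x ∈ w ↔ x ∈ S := by
  rw [← Multiset.mem_coe, hw, Finset.mem_val]

theorem length_eq_card_of_coe_eq_val (hw : (w : Multiset α) = S.val) : w.length = S.card := by
  rw [← Multiset.coe_card, hw, Finset.card_val]

theorem ne_nil_of_coe_eq_val (hw : (w : Multiset α) = S.val) (hS : S.Nonempty) : w ≠ [] := by
  rintro rfl
  obtain ⟨x, hx⟩ := hS
  simpa using (mem_iff_mem_of_coe_eq_val hw).2 hx

theorem coe_cons_eq_val_iff [DecidableEq α] (hs : s ∈ S) :
    ((s :: w : List α) : Multiset α) = S.val ↔ (w : Multiset α) = (S.erase s).val := by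
  rw [← Multiset.cons_coe, Finset.erase_val]
  constructor
  · intro h
    rw [← h, Multiset.erase_cons_head]
  · intro h
    rw [h, Multiset.cons_erase hs]

end CoeEqVal

theorem isCPermA_cons (C : List (Finset ℕ)) (s : ℕ) (w : List ℕ) :
    IsCPermA C (s :: w) ↔ AdmissibleA C s ∧ IsCPermA (deleteA C s) w :=
  Iff.rfl

theorem isCPermA_nil_iff (w : List ℕ) : IsCPermA [] w ↔ w = [] := by
  rcases w with _ | ⟨s, w⟩
  · simp [IsCPermA]
  · simp [IsCPermA, AdmissibleA]

theorem admissibleA_singleton_iff {s t : ℕ} : AdmissibleA [{t}] s ↔ s = t := by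
  constructor
  · rintro ⟨i, hi, hmem, -⟩
    obtain rfl : i = 0 := by simpa using hi
    simpa using hmem
  · rintro rfl
    exact ⟨0, by simp, by simp, Or.inl ⟨rfl, by simp⟩⟩

theorem isCPermA_singleton_iff (t : ℕ) (w : List ℕ) : IsCPermA [{t}] w ↔ w = [t] := by
  rcases w with _ | ⟨s, w⟩
  · simp [IsCPermA]
  · rw [isCPermA_cons, admissibleA_singleton_iff, List.cons.injEq]
    refine and_congr_right fun hst => ?_
    rw [hst, show deleteA [{t}] t = [] by simp [deleteA], isCPermA_nil_iff]

section Deletion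

variable {s : ℕ} {pre post : List (Finset ℕ)} {X Y Z : Finset ℕ}

theorem findIdx_append_cons_cons (hpre : ∀ b ∈ pre, s ∉ b) (hY : s ∉ Y) (hX : s ∈ X)
    (l : List (Finset ℕ)) :
    (pre ++ Y :: X :: l).findIdx (fun b => decide (s ∈ b)) = pre.length + 1 := by
  rw [List.findIdx_append, List.findIdx_eq_length_of_false (by simpa using hpre)]
  simp [List.findIdx_cons, hY, hX, add_comm]

theorem deleteA_first (hX : s ∈ X) :
    deleteA (X :: Z :: post) s = (X.filter (s < ·) ∪ Z) :: post := by
  simp [deleteA, List.findIdx_cons, hX]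

theorem deleteA_middle (hpre : ∀ b ∈ pre, s ∉ b) (hY : s ∉ Y) (hX : s ∈ X) :
    deleteA (pre ++ [Y, X, Z] ++ post) s =
      pre ++ [Y ∪ X.filter (· < s), X.filter (s < ·) ∪ Z] ++ post := by
  simp only [List.append_assoc, List.cons_append, List.nil_append]
  simp only [deleteA, findIdx_append_cons_cons hpre hY hX, List.length_append, List.length_cons,
    Nat.add_sub_cancel]
  rw [if_neg (by omega), if_neg (by omega), if_neg (by omega)]
  simp [List.take_left', List.drop_length_add_append, Nat.add_assoc]

theorem deleteA_last (hpre : ∀ b ∈ pre, s ∉ b) (hY : s ∉ Y) (hX : s ∈ X) :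
    deleteA (pre ++ [Y, X]) s = pre ++ [Y ∪ X.filter (· < s)] := by
  have := findIdx_append_cons_cons hpre hY hX []
  simp only [deleteA, this, List.length_append, List.length_cons, List.length_nil,
    Nat.add_sub_cancel]
  rw [if_neg (by omega), if_neg (by omega), if_pos (by omega)]
  simp [List.take_left']

end Deletion

def twoBlocks (q e : ℕ) (A B : Finset ℕ) : List (Finset ℕ) :=
  List.replicate q ∅ ++ [A, B] ++ List.replicate e ∅

section TwoBlocks

variable {q e s : ℕ} {A B : Finset ℕ}

theorem length_twoBlocks : (twoBlocks q e A B).length = q + e + 2 := by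
  simp [twoBlocks]; omega

theorem getD_twoBlocks (i : ℕ) :
    (twoBlocks q e A B).getD i ∅ = if i = q then A else if i = q + 1 then B else ∅ := by
  simp only [twoBlocks, List.getD_eq_getElem?_getD, List.getElem?_append, List.getElem?_replicate,
    List.length_append, List.length_replicate, List.length_cons, List.length_nil]
  split_ifs <;> simp_all [List.getElem?_cons]
  split_ifs <;> simp_all <;> omega

theorem mem_union_of_admissibleA_twoBlocks (h : AdmissibleA (twoBlocks q e A B) s) :
    s ∈ A ∪ B := by
  obtain ⟨i, -, hmem, -⟩ := h
  rw [getD_twoBlocks] at hmem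
  split_ifs at hmem
  · exact Finset.mem_union_left _ hmem
  · exact Finset.mem_union_right _ hmem
  · simp at hmem

theorem admissibleA_twoBlocks_succ_left (hs : s ∈ A) :
    AdmissibleA (twoBlocks (q + 1) e A B) s :=
  ⟨q + 1, by rw [length_twoBlocks]; omega, by rwa [getD_twoBlocks, if_pos rfl],
    Or.inr (Or.inr ⟨by omega, by rw [length_twoBlocks]; omega⟩)⟩

theorem admissibleA_twoBlocks_succ_right (hs : s ∈ B) :
    AdmissibleA (twoBlocks q (e + 1) A B) s :=
  ⟨q + 1, by rw [length_twoBlocks]; omega, by rwa [getD_twoBlocks, if_neg (by omega), if_pos rfl],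
    Or.inr (Or.inr ⟨by omega, by rw [length_twoBlocks]; omega⟩)⟩

theorem admissibleA_twoBlocks_zero_left_iff (hs : s ∈ A) (hsB : s ∉ B) :
    AdmissibleA (twoBlocks 0 e A B) s ↔ ∀ t ∈ A, s ≤ t := by
  constructor
  · rintro ⟨i, -, hmem, h⟩
    rw [getD_twoBlocks] at hmem
    split_ifs at hmem with h0
    · subst h0
      rcases h with ⟨-, hmin⟩ | ⟨hlast, -⟩ | ⟨hpos, -⟩
      · rwa [getD_twoBlocks, if_pos rfl] at hmin
      · simp [length_twoBlocks] at hlast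
      · omega
    · exact absurd hmem hsB
    · simp at hmem
  · intro hmin
    exact ⟨0, by simp [length_twoBlocks], by rwa [getD_twoBlocks, if_pos rfl],
      Or.inl ⟨rfl, by rwa [getD_twoBlocks, if_pos rfl]⟩⟩

theorem admissibleA_twoBlocks_zero_right_iff (hs : s ∈ B) (hsA : s ∉ A) :
    AdmissibleA (twoBlocks q 0 A B) s ↔ ∀ t ∈ B, t ≤ s := by
  constructor
  · rintro ⟨i, -, hmem, h⟩
    rw [getD_twoBlocks] at hmem
    split_ifs at hmem with h0 h1
    · exact absurd hmem hsA
    · subst h1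
      rcases h with ⟨hfirst, -⟩ | ⟨-, hmax⟩ | ⟨-, hlast⟩
      · omega
      · rwa [getD_twoBlocks, if_neg (by omega), if_pos rfl] at hmax
      · simp [length_twoBlocks] at hlast
    · simp at hmem
  · intro hmax
    have hB : (twoBlocks q 0 A B).getD (q + 1) ∅ = B := by
      rw [getD_twoBlocks, if_neg (by omega), if_pos rfl]
    exact ⟨q + 1, by simp [length_twoBlocks], by rwa [hB],
      Or.inr (Or.inl ⟨by simp [length_twoBlocks], by rwa [hB]⟩)⟩

theorem deleteA_twoBlocks_succ_left (hs : s ∈ A) :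
    deleteA (twoBlocks (q + 1) e A B) s =
      twoBlocks q e (A.filter (· < s)) (A.filter (s < ·) ∪ B) := by
  have h := deleteA_middle (pre := List.replicate q ∅) (Y := ∅) (Z := B)
    (post := List.replicate e ∅) (by simp) (Finset.notMem_empty s) hs
  rw [Finset.empty_union] at h
  simpa [twoBlocks, List.replicate_succ'] using h

theorem deleteA_twoBlocks_zero_left (hs : s ∈ A) :
    deleteA (twoBlocks 0 e A B) s = (A.filter (s < ·) ∪ B) :: List.replicate e ∅ :=
  deleteA_first hs

theorem deleteA_twoBlocks_succ_right (hs : s ∈ B) (hsA : s ∉ A) :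
    deleteA (twoBlocks q (e + 1) A B) s =
      twoBlocks q e (A ∪ B.filter (· < s)) (B.filter (s < ·)) := by
  have h := deleteA_middle (pre := List.replicate q ∅) (Y := A) (Z := ∅)
    (post := List.replicate e ∅) (by simp) hsA hs
  rw [Finset.union_empty] at h
  simpa [twoBlocks, List.replicate_succ] using h

theorem deleteA_twoBlocks_zero_right (hs : s ∈ B) (hsA : s ∉ A) :
    deleteA (twoBlocks q 0 A B) s = List.replicate q ∅ ++ [A ∪ B.filter (· < s)] := by
  rw [← deleteA_last (by simp) hsA hs]
  simp [twoBlocks]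

end TwoBlocks

/-- `(w : Multiset ℕ) = S.val` says that `w` lists every element of `S` exactly once. -/
def TwoBlocksCriterion (w : List ℕ) : Prop :=
  ∀ ⦃q e : ℕ⦄ ⦃A B : Finset ℕ⦄ ⦃μ : ℚ⦄, (A ∪ B).card = q + e + 2 →
    (∀ a ∈ A, (a : ℚ) < μ) → (∀ b ∈ B, μ < b) →
    (IsCPermA (twoBlocks q e A B) w ↔
      (w : Multiset ℕ) = (A ∪ B).val ∧
        listDescents (μ :: w.map ((↑) : ℕ → ℚ)) = q + 1)

namespace TwoBlocksCriterion

variable {w : List ℕ} {q e s : ℕ} {A B : Finset ℕ} {μ : ℚ}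

theorem cons_succ_left (ih : TwoBlocksCriterion w) (hcard : (A ∪ B).card = q + 1 + e + 2)
    (hA : ∀ a ∈ A, (a : ℚ) < μ) (hB : ∀ b ∈ B, μ < b) (hs : s ∈ A) :
    IsCPermA (twoBlocks (q + 1) e A B) (s :: w) ↔
      ((s :: w : List ℕ) : Multiset ℕ) = (A ∪ B).val ∧
        listDescents (μ :: (s :: w).map ((↑) : ℕ → ℚ)) = q + 1 + 1 := by
  have hsμ := hA s hs
  have hsB : s ∉ B := fun h => lt_asymm hsμ (hB s h)
  have hS : s ∈ A ∪ B := Finset.mem_union_left B hs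
  have hU : A.filter (· < s) ∪ (A.filter (s < ·) ∪ B) = (A ∪ B).erase s := by
    ext x; simp only [Finset.mem_union, Finset.mem_filter, Finset.mem_erase]; grind
  have ih' := ih (q := q) (e := e) (μ := s) (by rw [hU, Finset.card_erase_of_mem hS, hcard]; omega)
    (fun a ha => Nat.cast_lt.2 (Finset.mem_filter.1 ha).2)
    (fun b hb => (Finset.mem_union.1 hb).elim (fun hb => Nat.cast_lt.2 (Finset.mem_filter.1 hb).2)
      fun hb => hsμ.trans (hB b hb))
  rw [isCPermA_cons, and_iff_right (admissibleA_twoBlocks_succ_left hs),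
    deleteA_twoBlocks_succ_left hs, ih', hU, coe_cons_eq_val_iff hS, List.map_cons,
    listDescents_cons_cons, if_pos hsμ]
  exact and_congr_right fun _ => by omega

theorem cons_succ_right (ih : TwoBlocksCriterion w) (hcard : (A ∪ B).card = q + (e + 1) + 2)
    (hA : ∀ a ∈ A, (a : ℚ) < μ) (hB : ∀ b ∈ B, μ < b) (hs : s ∈ B) :
    IsCPermA (twoBlocks q (e + 1) A B) (s :: w) ↔
      ((s :: w : List ℕ) : Multiset ℕ) = (A ∪ B).val ∧
        listDescents (μ :: (s :: w).map ((↑) : ℕ → ℚ)) = q + 1 := by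
  have hμs := hB s hs
  have hsA : s ∉ A := fun h => lt_asymm hμs (hA s h)
  have hS : s ∈ A ∪ B := Finset.mem_union_right A hs
  have hU : A ∪ B.filter (· < s) ∪ B.filter (s < ·) = (A ∪ B).erase s := by
    ext x; simp only [Finset.mem_union, Finset.mem_filter, Finset.mem_erase]; grind
  have ih' := ih (q := q) (e := e) (μ := s) (by rw [hU, Finset.card_erase_of_mem hS, hcard]; omega)
    (fun a ha => (Finset.mem_union.1 ha).elim (fun ha => (hA a ha).trans hμs)
      fun ha => Nat.cast_lt.2 (Finset.mem_filter.1 ha).2)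
    (fun b hb => Nat.cast_lt.2 (Finset.mem_filter.1 hb).2)
  rw [isCPermA_cons, and_iff_right (admissibleA_twoBlocks_succ_right hs),
    deleteA_twoBlocks_succ_right hs hsA, ih', hU, coe_cons_eq_val_iff hS, List.map_cons,
    listDescents_cons_cons, if_neg hμs.not_gt, zero_add]

theorem isCPermA_cons_replicate (ih : TwoBlocksCriterion w) {S : Finset ℕ}
    (hcard : S.card = e + 1) :
    IsCPermA (S :: List.replicate e ∅) w ↔
      (w : Multiset ℕ) = S.val ∧ listDescents (w.map ((↑) : ℕ → ℚ)) = 0 := by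
  rcases e with _ | e
  · obtain ⟨t, rfl⟩ := Finset.card_eq_one.1 hcard
    rw [List.replicate_zero, isCPermA_singleton_iff, Finset.singleton_val,
      Multiset.coe_eq_singleton, iff_self_and]
    rintro rfl
    rfl
  · obtain ⟨m, hm⟩ := S.exists_nat_subset_range
    have hSm : ∀ x ∈ S, (x : ℚ) < m := fun x hx => Nat.cast_lt.2 (Finset.mem_range.1 (hm hx))
    -- `S :: List.replicate (e + 1) ∅` is `twoBlocks 0 e S ∅`, with any threshold above `S`
    refine (ih (q := 0) (e := e) (B := ∅) (μ := m) (by simpa using hcard) hSm (by simp)).trans ?_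
    rw [Finset.union_empty]
    refine and_congr_right fun hw => ?_
    rw [listDescents_cons_of_forall_lt
      (by simpa using ne_nil_of_coe_eq_val hw (Finset.card_pos.1 (by omega)))
      (by simpa using fun x hx => hSm x ((mem_iff_mem_of_coe_eq_val hw).1 hx))]
    omega

theorem isCPermA_replicate_append (ih : TwoBlocksCriterion w) {S : Finset ℕ}
    (hcard : S.card = q + 1) :
    IsCPermA (List.replicate q ∅ ++ [S]) w ↔
      (w : Multiset ℕ) = S.val ∧ listDescents (w.map ((↑) : ℕ → ℚ)) = q := by
  rcases q with _ | q
  · obtain ⟨t, rfl⟩ := Finset.card_eq_one.1 hcard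
    rw [List.replicate_zero, List.nil_append, isCPermA_singleton_iff, Finset.singleton_val,
      Multiset.coe_eq_singleton, iff_self_and]
    rintro rfl
    rfl
  · have hpos (x : ℕ) : (-1 : ℚ) < x := neg_one_lt_zero.trans_le (Nat.cast_nonneg x)
    rw [show List.replicate (q + 1) ∅ ++ [S] = twoBlocks q 0 ∅ S by
        simp [twoBlocks, List.replicate_succ'],
      ih (by simpa using hcard) (by simp) (fun x _ => hpos x), Finset.empty_union,
      listDescents_cons_of_forall_le (by simpa using fun x _ => (hpos x).le)]

theorem cons_zero_left (ih : TwoBlocksCriterion w) (hcard : (A ∪ B).card = e + 2)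
    (hA : ∀ a ∈ A, (a : ℚ) < μ) (hB : ∀ b ∈ B, μ < b) (hs : s ∈ A) :
    IsCPermA (twoBlocks 0 e A B) (s :: w) ↔
      ((s :: w : List ℕ) : Multiset ℕ) = (A ∪ B).val ∧
        listDescents (μ :: (s :: w).map ((↑) : ℕ → ℚ)) = 1 := by
  have hsμ := hA s hs
  have hsB : s ∉ B := fun h => lt_asymm hsμ (hB s h)
  have hS : s ∈ A ∪ B := Finset.mem_union_left B hs
  rw [isCPermA_cons, admissibleA_twoBlocks_zero_left_iff hs hsB, deleteA_twoBlocks_zero_left hs,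
    coe_cons_eq_val_iff hS, List.map_cons, listDescents_cons_cons, if_pos hsμ]
  by_cases hmin : ∀ t ∈ A, s ≤ t
  · have hgt : ∀ t ∈ (A ∪ B).erase s, s < t := by
      intro t ht
      obtain ⟨hts, htA | htB⟩ := by simpa only [Finset.mem_erase, Finset.mem_union] using ht
      · exact (hmin t htA).lt_of_ne' hts
      · exact_mod_cast hsμ.trans (hB t htB)
    have hU : A.filter (s < ·) ∪ B = (A ∪ B).erase s := by
      ext x; simp only [Finset.mem_union, Finset.mem_filter, Finset.mem_erase]; grind
    rw [and_iff_right hmin, hU,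
      ih.isCPermA_cons_replicate (by rw [Finset.card_erase_of_mem hS, hcard]; rfl)]
    refine and_congr_right fun hw => ?_
    rw [listDescents_cons_of_forall_le
      (by simpa using fun x hx => (hgt x ((mem_iff_mem_of_coe_eq_val hw).1 hx)).le)]
    omega
  · obtain ⟨t, htA, hts⟩ : ∃ t ∈ A, t < s := by simpa using hmin
    simp only [hmin, false_and, false_iff, not_and]
    intro hw
    have htw : t ∈ w := (mem_iff_mem_of_coe_eq_val hw).2 (by simp [hts.ne, htA])
    have := one_le_listDescents_cons (List.mem_map_of_mem (f := ((↑) : ℕ → ℚ)) htw)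
      (Nat.cast_lt.2 hts)
    omega

theorem cons_zero_right (ih : TwoBlocksCriterion w) (hcard : (A ∪ B).card = q + 2)
    (hA : ∀ a ∈ A, (a : ℚ) < μ) (hB : ∀ b ∈ B, μ < b) (hs : s ∈ B) :
    IsCPermA (twoBlocks q 0 A B) (s :: w) ↔
      ((s :: w : List ℕ) : Multiset ℕ) = (A ∪ B).val ∧
        listDescents (μ :: (s :: w).map ((↑) : ℕ → ℚ)) = q + 1 := by
  have hμs := hB s hs
  have hsA : s ∉ A := fun h => lt_asymm hμs (hA s h)
  have hS : s ∈ A ∪ B := Finset.mem_union_right A hs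
  have hcard' : ((A ∪ B).erase s).card = q + 1 := by
    rw [Finset.card_erase_of_mem hS, hcard]; rfl
  rw [isCPermA_cons, admissibleA_twoBlocks_zero_right_iff hs hsA,
    deleteA_twoBlocks_zero_right hs hsA, coe_cons_eq_val_iff hS, List.map_cons,
    listDescents_cons_cons, if_neg hμs.not_gt, zero_add]
  by_cases hmax : ∀ t ∈ B, t ≤ s
  · have hlt : ∀ t ∈ (A ∪ B).erase s, t < s := by
      intro t ht
      obtain ⟨hts, htA | htB⟩ := by simpa only [Finset.mem_erase, Finset.mem_union] using ht
      · exact_mod_cast (hA t htA).trans hμs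
      · exact (hmax t htB).lt_of_ne hts
    have hU : A ∪ B.filter (· < s) = (A ∪ B).erase s := by
      ext x; simp only [Finset.mem_union, Finset.mem_filter, Finset.mem_erase]; grind
    rw [and_iff_right hmax, hU, ih.isCPermA_replicate_append hcard']
    refine and_congr_right fun hw => ?_
    rw [listDescents_cons_of_forall_lt
      (by simpa using ne_nil_of_coe_eq_val hw (Finset.card_pos.1 (by omega)))
      (by simpa using fun x hx => hlt x ((mem_iff_mem_of_coe_eq_val hw).1 hx))]
    omega
  · obtain ⟨t, htB, hst⟩ : ∃ t ∈ B, s < t := by simpa using hmax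
    simp only [hmax, false_and, false_iff, not_and]
    intro hw
    have htw : t ∈ w := (mem_iff_mem_of_coe_eq_val hw).2 (by simp [hst.ne', htB])
    have := listDescents_cons_lt_length (List.mem_map_of_mem (f := ((↑) : ℕ → ℚ)) htw)
      (Nat.cast_lt.2 hst)
    rw [List.length_map, length_eq_card_of_coe_eq_val hw, hcard'] at this
    omega

end TwoBlocksCriterion

theorem twoBlocksCriterion (w : List ℕ) : TwoBlocksCriterion w := by
  induction w with
  | nil =>
    intro q e A B μ hcard _ _
    refine iff_of_false (fun h => ?_) (fun h => ?_)
    · have hA : A = ∅ := h A (by simp [twoBlocks])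
      have hB : B = ∅ := h B (by simp [twoBlocks])
      simp [hA, hB] at hcard
    · simp [listDescents_singleton] at h
  | cons s w ih =>
    intro q e A B μ hcard hA hB
    by_cases hs : s ∈ A ∪ B
    · rcases Finset.mem_union.1 hs with hsA | hsB
      · rcases q with _ | q
        · rw [zero_add] at hcard ⊢
          exact ih.cons_zero_left hcard hA hB hsA
        · exact ih.cons_succ_left hcard hA hB hsA
      · rcases e with _ | e
        · exact ih.cons_zero_right hcard hA hB hsB
        · exact ih.cons_succ_right hcard hA hB hsB
    · refine iff_of_false (fun h => hs (mem_union_of_admissibleA_twoBlocks h.1)) fun h => hs ?_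
      exact (mem_iff_mem_of_coe_eq_val h.1).1 List.mem_cons_self

theorem natCast_lt_add_half_iff {a r : ℕ} : (a : ℚ) < r + 1 / 2 ↔ a ≤ r := by
  constructor
  · intro h
    by_contra hra
    have : ((r + 1 : ℕ) : ℚ) ≤ a := Nat.cast_le.2 (by omega)
    push_cast at this
    linarith
  · intro h
    have : (a : ℚ) ≤ r := Nat.cast_le.2 h
    linarith

def succAbove (p x : ℕ) : ℕ := if x < p then x else x + 1

theorem strictMono_succAbove (p : ℕ) : StrictMono (succAbove p) := by
  intro x y h
  unfold succAbove
  split_ifs <;> omega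

theorem succAbove_lt_iff {p x : ℕ} : succAbove p x < p ↔ x < p := by
  unfold succAbove
  split_ifs <;> omega

theorem perm_cons_map_succAbove {r n : ℕ} (hr : r ≤ n) :
    ((r + 1) :: (List.range' 1 n).map (succAbove (r + 1))).Perm (List.range' 1 (n + 1)) := by
  refine (List.perm_ext_iff_of_nodup ?_ List.nodup_range').2 fun y => ?_
  · refine List.nodup_cons.2
      ⟨?_, (List.nodup_range' (step := 1)).map (strictMono_succAbove _).injective⟩
    simp only [List.mem_map, not_exists, not_and]
    intro x _
    unfold succAbove
    split_ifs <;> omega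
  · simp only [List.mem_cons, List.mem_map, List.mem_range'_1]
    constructor
    · rintro (rfl | ⟨x, hx, rfl⟩)
      · omega
      · unfold succAbove
        split_ifs <;> omega
    · intro hy
      by_cases hyr : y = r + 1
      · exact Or.inl hyr
      · refine Or.inr ⟨if y < r + 1 then y else y - 1, ?_, ?_⟩
        · split_ifs <;> omega
        · unfold succAbove
          split_ifs <;> omega

theorem exists_eq_cons_map_succAbove {r n : ℕ} (hr : r ≤ n) {v : List ℕ}
    (hv : v.Perm (List.range' 1 (n + 1))) (hhead : v.headI = r + 1) :
    ∃ w : List ℕ, w.Perm (List.range' 1 n) ∧ v = (r + 1) :: w.map (succAbove (r + 1)) := by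
  obtain ⟨u, rfl⟩ : ∃ u, v = (r + 1) :: u := by
    rcases v with _ | ⟨a, u⟩
    · simpa using hv.length_eq
    · exact ⟨u, by rw [← hhead]; rfl⟩
  have hu := (List.perm_cons _).1 (hv.trans (perm_cons_map_succAbove hr).symm)
  have hsurj : ∀ y ∈ u, ∃ x, succAbove (r + 1) x = y := fun y hy => by
    obtain ⟨x, -, hx⟩ := List.mem_map.1 (hu.subset hy)
    exact ⟨x, hx⟩
  choose! g hg using hsurj
  have hmap : (u.map g).map (succAbove (r + 1)) = u := by
    rw [List.map_map]
    exact (List.map_congr_left hg).trans (List.map_id u)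
  refine ⟨u.map g, ?_, by rw [hmap]⟩
  rw [← List.map_perm_map_iff (strictMono_succAbove _).injective, hmap]
  exact hu

theorem natCard_perm_cons_map_succAbove {r n : ℕ} (hr : r ≤ n) (P : List ℕ → Prop) :
    Nat.card {w : List ℕ //
        w.Perm (List.range' 1 n) ∧ P ((r + 1) :: w.map (succAbove (r + 1)))} =
      Nat.card {v : List ℕ // v.Perm (List.range' 1 (n + 1)) ∧ P v ∧ v.headI = r + 1} := by
  refine Nat.card_eq_of_bijective (fun w => ⟨(r + 1) :: w.1.map (succAbove (r + 1)),
    ((w.2.1.map _).cons _).trans (perm_cons_map_succAbove hr), w.2.2, rfl⟩)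
    ⟨fun w₁ w₂ h => ?_, fun v => ?_⟩
  · exact Subtype.ext <| List.map_injective_iff.2 (strictMono_succAbove _).injective
      (List.cons_injective (congrArg Subtype.val h))
  · obtain ⟨w, hw, hv⟩ := exists_eq_cons_map_succAbove hr v.2.1 v.2.2.2
    exact ⟨⟨w, hw, hv ▸ v.2.2.1⟩, Subtype.ext hv.symm⟩

theorem listDescents_cons_map_succAbove (r : ℕ) (w : List ℕ) :
    listDescents ((r + 1) :: w.map (succAbove (r + 1))) =
      listDescents (((r : ℚ) + 1 / 2) :: w.map ((↑) : ℕ → ℚ)) := by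
  rcases w with _ | ⟨a, w⟩
  · rfl
  · have hhead : succAbove (r + 1) a < r + 1 ↔ (a : ℚ) < r + 1 / 2 := by
      rw [succAbove_lt_iff, natCast_lt_add_half_iff, Nat.lt_succ_iff]
    rw [List.map_cons, List.map_cons, listDescents_cons_cons, listDescents_cons_cons,
      ← List.map_cons, ← List.map_cons, listDescents_map_of_strictMono (strictMono_succAbove _),
      listDescents_map_of_strictMono Nat.strictMono_cast]
    simp only [hhead]

theorem countP_permutations_eq_natCard {α : Type*} [DecidableEq α] {L : List α} (hL : L.Nodup)
    (p : List α → Prop) [DecidablePred p] :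
    L.permutations.countP (fun v => decide (p v)) = Nat.card {v : List α // v.Perm L ∧ p v} := by
  rw [List.countP_eq_length_filter,
    ← List.toFinset_card_of_nodup ((List.nodup_permutations L hL).filter _),
    ← Nat.card_eq_finsetCard]
  exact Nat.card_congr (Equiv.subtypeEquivRight fun v => by simp [List.mem_permutations])

theorem isCPermA_adjacent_iff {n k r : ℕ} (h1 : 2 ≤ k) (h2 : k ≤ n) (h3 : r ≤ n)
    (w : List ℕ) :
    IsCPermA (List.replicate (k - 2) ∅ ++ [Finset.Icc 1 r, Finset.Icc (r + 1) n] ++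
        List.replicate (n - k) ∅) w ↔
      w.Perm (List.range' 1 n) ∧
        listDescents (((r : ℚ) + 1 / 2) :: w.map ((↑) : ℕ → ℚ)) = k - 1 := by
  have hU : Finset.Icc 1 r ∪ Finset.Icc (r + 1) n = Finset.Icc 1 n := by
    ext x
    simp only [Finset.mem_union, Finset.mem_Icc]
    omega
  refine (twoBlocksCriterion w (q := k - 2) (e := n - k) (by rw [hU, Nat.card_Icc]; omega)
    (fun a ha => natCast_lt_add_half_iff.2 (Finset.mem_Icc.1 ha).2) fun b hb => ?_).trans ?_
  · have : ((r + 1 : ℕ) : ℚ) ≤ b := Nat.cast_le.2 (Finset.mem_Icc.1 hb).1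
    push_cast at this
    linarith
  · rw [hU, show k - 2 + 1 = k - 1 by omega]
    exact and_congr_left' Multiset.coe_eq_coe

/-- for `|C| = (0^{k-2}, r, n-r, 0^{n-k})`, a permutation `w` of
`{1,…,n}` is a `C`-permutation iff the sequence `r + 1/2, w₁, …, w_n` has exactly
`k-1` descents; hence the count is the number of `v ∈ S_{n+1}` with `k-1` descents
and `v(1) = r+1`. -/
theorem cperm_adjacent (n k r : ℕ) (h1 : 2 ≤ k) (h2 : k ≤ n) (h3 : r ≤ n) :
    (∀ w : List ℕ, w.Perm (List.range' 1 n) →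
      (IsCPermA (List.replicate (k - 2) ∅ ++ [Finset.Icc 1 r, Finset.Icc (r + 1) n] ++
          List.replicate (n - k) ∅) w ↔
        listDescents (((r : ℚ) + 1/2) :: w.map (fun s => (s : ℚ))) = k - 1)) ∧
    Nat.card {w : List ℕ //
        IsCPermA (List.replicate (k - 2) ∅ ++ [Finset.Icc 1 r, Finset.Icc (r + 1) n] ++
          List.replicate (n - k) ∅) w} =
      (List.range' 1 (n + 1)).permutations.countP
        (fun l => decide (listDescents l = k - 1 ∧ l.headI = r + 1)) := by
  refine ⟨fun w hw => ?_, ?_⟩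
  · -- in the statement, `w.map (fun s => (s : ℚ))` coerces `w` to `List ℚ` via the list monad
    simpa only [List.pure_def, List.bind_eq_flatMap, List.map_id_fun', id_eq,
      ← List.map_eq_flatMap, hw, true_and] using isCPermA_adjacent_iff h1 h2 h3 w
  · rw [countP_permutations_eq_natCard List.nodup_range', ← natCard_perm_cons_map_succAbove h3]
    exact Nat.card_congr (Equiv.subtypeEquivRight fun w => by
      rw [isCPermA_adjacent_iff h1 h2 h3, listDescents_cons_map_succAbove])

end MixedEulerian
end

section
/- Let C = (C_1,...,C_n) be a division of a totally ordered n-element set S. The map sending each C-permutation w to its index function I_w^C is an injection from the set of C-permutations to the set of index functions of C. Moreover, this map is a bijection if and only if C is superdiagonal, i.e., |C_1| + ... + |C_i| ≥ i for all i. In particular, the number of C-permutations is at most 1^{|C_1|} 2^{|C_2|} ... n^{|C_n|}, with equality if and only if C is superdiagonal. -/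
open scoped Pointwise
open MeasureTheory Nat

namespace MixedEulerian

/-! When an admissible `s` is deleted from a division `C`, every other element either stays in
its block or moves one block down; it stays exactly when it lies in an earlier block than `s`,
or in the block of `s` above `s` (`deletePos`). So the index of `t` in a `C`-permutation is at
most the number of its block in `C`, with equality iff nothing deleted before `t` moved it.

Injectivity: if two `C`-permutations began with different letters `s ≠ s'`, then `s` reaches
its maximal index in the first one, so deleting `s'` must leave `s` in place, and symmetrically;
the two conditions contradict each other.

Surjectivity for superdiagonal `C`: call `t` tight for `I` if `I t` is the number of its block.
Delete first the tight element in the last block that contains one, the smallest such. It is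
admissible (the first block is entirely tight, and superdiagonality leaves at most one element
for the last block), no other tight element moves, and superdiagonality passes to the smaller
division. Conversely, realising the maximal index function forces at least `m` elements into
the first `m` blocks. The counts follow by viewing `I_w^C` in `∏_{t ∈ S} {1, …, block of t}`.
-/

open Finset

/-- The `0`-based number of the block containing `t` (`C.length` if there is none). -/
def blockIndex (C : List (Finset ℕ)) (t : ℕ) : ℕ := C.findIdx (fun b => decide (t ∈ b))

/-- The block of `t` after deleting `s`. Truncated subtraction would misplace elements of the
first block below `s`, but for admissible `s` there are none. -/
def deletePos (C : List (Finset ℕ)) (s t : ℕ) : ℕ :=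
  if blockIndex C t < blockIndex C s ∨ (blockIndex C t = blockIndex C s ∧ s < t) then
    blockIndex C t
  else blockIndex C t - 1

theorem length_deleteA {C : List (Finset ℕ)} {s : ℕ} (hs : blockIndex C s < C.length) :
    (deleteA C s).length = C.length - 1 := by
  unfold deleteA
  simp only [blockIndex] at hs ⊢
  split_ifs <;> simp <;> omega

theorem getD_deleteA {C : List (Finset ℕ)} {s k : ℕ} (hk : k + 1 < C.length) :
    (deleteA C s).getD k ∅ =
      if k + 1 < blockIndex C s then C.getD k ∅
      else if k + 1 = blockIndex C s then
        C.getD k ∅ ∪ (C.getD (blockIndex C s) ∅).filter (· < s)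
      else if k = blockIndex C s then
        (C.getD (blockIndex C s) ∅).filter (s < ·) ∪ C.getD (k + 1) ∅
      else C.getD (k + 1) ∅ := by
  unfold deleteA
  simp only [blockIndex]
  obtain ⟨j, hj⟩ : ∃ j, C.findIdx (fun b => decide (s ∈ b)) = j := ⟨_, rfl⟩
  simp only [hj, List.getD_eq_getElem?_getD]
  split_ifs <;> (try omega) <;>
    simp (disch := omega) [List.getElem?_append, List.getElem?_take, List.getElem?_drop,
      List.getElem?_cons] <;>
    (try split_ifs) <;> (try omega) <;> simp_all <;>
    first | (congr 1; omega) | (congr 2; omega)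

section Division

variable {C : List (Finset ℕ)} {S : Finset ℕ} {s t u k m : ℕ}

theorem IsDivision.blockIndex_eq (hC : IsDivision C S) (hk : k < C.length)
    (ht : t ∈ C.getD k ∅) : blockIndex C t = k := by
  rw [List.getD_eq_getElem _ _ hk] at ht
  have hle : blockIndex C t ≤ k := by
    by_contra! h
    simpa [ht] using List.not_of_lt_findIdx h
  have hlt : blockIndex C t < C.length := by omega
  have hmem : t ∈ C[blockIndex C t] := of_decide_eq_true (List.findIdx_getElem (w := hlt))
  refine hle.eq_or_lt.resolve_right fun h => lt_irrefl t ?_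
  exact hC.2.2 _ _ h hk t (by rwa [List.getD_eq_getElem _ _ hlt]) t
    (by rwa [List.getD_eq_getElem _ _ hk])

theorem IsDivision.mem_getD_iff (hC : IsDivision C S) (hk : k < C.length) :
    t ∈ C.getD k ∅ ↔ t ∈ S ∧ blockIndex C t = k :=
  ⟨fun ht => ⟨hC.2.1 k hk ht, hC.blockIndex_eq hk ht⟩, fun ⟨ht, h⟩ => by
    obtain ⟨i, hi, hti⟩ := hC.1 t ht
    rwa [← h, hC.blockIndex_eq hi hti]⟩

theorem IsDivision.blockIndex_lt (hC : IsDivision C S) (ht : t ∈ S) :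
    blockIndex C t < C.length := by
  obtain ⟨i, hi, hti⟩ := hC.1 t ht
  rwa [hC.blockIndex_eq hi hti]

theorem IsDivision.mem_getD_blockIndex (hC : IsDivision C S) (ht : t ∈ S) :
    t ∈ C.getD (blockIndex C t) ∅ :=
  (hC.mem_getD_iff (hC.blockIndex_lt ht)).2 ⟨ht, rfl⟩

theorem IsDivision.lt_of_blockIndex_lt (hC : IsDivision C S) (ht : t ∈ S) (hu : u ∈ S)
    (h : blockIndex C t < blockIndex C u) : t < u :=
  hC.2.2 _ _ h (hC.blockIndex_lt hu) t (hC.mem_getD_blockIndex ht) u (hC.mem_getD_blockIndex hu)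

theorem IsDivision.of_mem_getD_iff {f : ℕ → ℕ} (hf : ∀ t ∈ S, f t < C.length)
    (hC : ∀ k < C.length, ∀ t, t ∈ C.getD k ∅ ↔ t ∈ S ∧ f t = k)
    (hmono : ∀ t ∈ S, ∀ u ∈ S, f t < f u → t < u) : IsDivision C S := by
  refine ⟨fun t ht => ⟨f t, hf t ht, (hC _ (hf t ht) t).2 ⟨ht, rfl⟩⟩,
    fun k hk t ht => ((hC k hk t).1 ht).1, fun i j hij hj t ht u hu => ?_⟩
  obtain ⟨htS, rfl⟩ := (hC i (hij.trans hj) t).1 ht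
  obtain ⟨huS, rfl⟩ := (hC j hj u).1 hu
  exact hmono t htS u huS hij

theorem IsDivision.filter_blockIndex_eq (hC : IsDivision C S) (hk : k < C.length) :
    {t ∈ S | blockIndex C t = k} = C.getD k ∅ := by
  ext t
  rw [mem_filter, hC.mem_getD_iff hk]

theorem IsDivision.card_filter_blockIndex_lt (hC : IsDivision C S) (hm : m ≤ C.length) :
    #{t ∈ S | blockIndex C t < m} = ∑ k ∈ range m, #(C.getD k ∅) := by
  rw [card_eq_sum_card_fiberwise (f := blockIndex C) (t := range m)
    fun t ht => mem_range.2 (mem_filter.1 ht).2]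
  refine sum_congr rfl fun k hk => ?_
  rw [filter_filter, ← hC.filter_blockIndex_eq (by simp at hk; omega)]
  congr 1
  ext t
  simp only [mem_filter, mem_range] at hk ⊢
  constructor <;> rintro ⟨h1, h2⟩ <;> simp_all

theorem IsDivision.superdiagonal_iff (hC : IsDivision C S) :
    Superdiagonal C ↔ ∀ m ≤ C.length, m ≤ #{t ∈ S | blockIndex C t < m} :=
  forall₂_congr fun _ hm => by rw [hC.card_filter_blockIndex_lt hm]

theorem IsDivision.prod_blockIndex_add_one (hC : IsDivision C S) :
    ∏ t ∈ S, (blockIndex C t + 1) = ∏ k ∈ range C.length, (k + 1) ^ #(C.getD k ∅) := by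
  rw [← prod_fiberwise_of_maps_to (g := blockIndex C) (t := range C.length)
    (fun t ht => mem_range.2 (hC.blockIndex_lt ht))]
  refine prod_congr rfl fun k hk => ?_
  rw [prod_congr rfl fun t ht => by rw [(mem_filter.1 ht).2], prod_const,
    hC.filter_blockIndex_eq (mem_range.1 hk)]

theorem IsDivision.admissibleA_iff (hC : IsDivision C S) :
    AdmissibleA C s ↔ s ∈ S ∧
      ((blockIndex C s = 0 ∧ ∀ t ∈ S, blockIndex C t = 0 → s ≤ t) ∨
        (blockIndex C s + 1 = C.length ∧
          ∀ t ∈ S, blockIndex C t = blockIndex C s → t ≤ s) ∨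
        (0 < blockIndex C s ∧ blockIndex C s + 1 < C.length)) := by
  constructor
  · rintro ⟨i, hi, hs, h⟩
    obtain rfl := hC.blockIndex_eq hi hs
    refine ⟨hC.2.1 _ hi hs, ?_⟩
    rcases h with ⟨h0, hmin⟩ | ⟨hlast, hmax⟩ | hmid
    · exact .inl ⟨h0, fun t ht h => hmin t ((hC.mem_getD_iff (by omega)).2 ⟨ht, h⟩)⟩
    · exact .inr (.inl ⟨by omega, fun t ht h => hmax t ((hC.mem_getD_iff hi).2 ⟨ht, h⟩)⟩)
    · exact .inr (.inr hmid)
  · rintro ⟨hs, h⟩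
    have hlt := hC.blockIndex_lt hs
    refine ⟨_, hlt, hC.mem_getD_blockIndex hs, ?_⟩
    rcases h with ⟨h0, hmin⟩ | ⟨hlast, hmax⟩ | hmid
    · refine .inl ⟨h0, fun t ht => ?_⟩
      obtain ⟨htS, h⟩ := (hC.mem_getD_iff (by omega)).1 ht
      exact hmin t htS h
    · refine .inr (.inl ⟨by omega, fun t ht => ?_⟩)
      obtain ⟨htS, h⟩ := (hC.mem_getD_iff hlt).1 ht
      exact hmax t htS h
    · exact .inr (.inr hmid)

end Division

section Deletion

variable {C : List (Finset ℕ)} {S : Finset ℕ} {s t k : ℕ}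

theorem deletePos_le : deletePos C s t ≤ blockIndex C t := by
  unfold deletePos; split <;> omega

theorem blockIndex_le_deletePos_add_one : blockIndex C t ≤ deletePos C s t + 1 := by
  unfold deletePos; split <;> omega

theorem IsDivision.lt_of_admissibleA_of_blockIndex_eq_zero (hC : IsDivision C S)
    (hcard : #S = C.length) (hs : AdmissibleA C s) (ht : t ∈ S) (hts : t ≠ s)
    (hs0 : blockIndex C s = 0) (ht0 : blockIndex C t = 0) : s < t := by
  obtain ⟨hsS, h⟩ := hC.admissibleA_iff.1 hs
  have : 1 < C.length := hcard ▸ one_lt_card.2 ⟨t, ht, s, hsS, hts⟩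
  rcases h with ⟨-, hmin⟩ | ⟨hlast, -⟩ | ⟨hpos, -⟩
  · exact (hmin t ht ht0).lt_of_ne' hts
  all_goals omega

theorem IsDivision.lt_of_admissibleA_of_blockIndex_eq_last (hC : IsDivision C S)
    (hcard : #S = C.length) (hs : AdmissibleA C s) (ht : t ∈ S) (hts : t ≠ s)
    (hlast : blockIndex C s + 1 = C.length) (hst : blockIndex C t = blockIndex C s) :
    t < s := by
  obtain ⟨hsS, h⟩ := hC.admissibleA_iff.1 hs
  have : 1 < C.length := hcard ▸ one_lt_card.2 ⟨t, ht, s, hsS, hts⟩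
  rcases h with ⟨hs0, -⟩ | ⟨-, hmax⟩ | ⟨-, hmid⟩
  · omega
  · exact (hmax t ht hst).lt_of_ne hts
  · omega

theorem IsDivision.mem_getD_deleteA_iff (hC : IsDivision C S) (hcard : #S = C.length)
    (hs : AdmissibleA C s) (hk : k + 1 < C.length) :
    t ∈ (deleteA C s).getD k ∅ ↔ t ∈ S.erase s ∧ deletePos C s t = k := by
  have hfirst := hC.lt_of_admissibleA_of_blockIndex_eq_zero hcard hs (t := t)
  have hlast := hC.lt_of_admissibleA_of_blockIndex_eq_last hcard hs (t := t)
  have hmem : ∀ i < C.length, t ∈ C.getD i ∅ ↔ t ∈ S ∧ blockIndex C t = i :=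
    fun i hi => hC.mem_getD_iff hi
  rw [getD_deleteA hk, mem_erase, deletePos]
  split_ifs <;> simp (disch := omega) only [mem_union, mem_filter, hmem] <;> grind

theorem IsDivision.deletePos_add_one_lt (hC : IsDivision C S) (hcard : #S = C.length)
    (hs : AdmissibleA C s) (ht : t ∈ S.erase s) : deletePos C s t + 1 < C.length := by
  obtain ⟨hts, htS⟩ := mem_erase.1 ht
  have hsS := (hC.admissibleA_iff.1 hs).1
  have : 1 < C.length := hcard ▸ one_lt_card.2 ⟨t, htS, s, hsS, hts⟩
  have := hC.blockIndex_lt htS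
  have := hC.blockIndex_lt hsS
  have := hC.lt_of_admissibleA_of_blockIndex_eq_last hcard hs htS hts
  unfold deletePos
  split_ifs <;> omega

theorem IsDivision.isDivision_deleteA (hC : IsDivision C S) (hcard : #S = C.length)
    (hs : AdmissibleA C s) : IsDivision (deleteA C s) (S.erase s) := by
  have hlen := length_deleteA (hC.blockIndex_lt (hC.admissibleA_iff.1 hs).1)
  refine IsDivision.of_mem_getD_iff (f := deletePos C s)
    (fun t ht => by have := hC.deletePos_add_one_lt hcard hs ht; omega)
    (fun k hk t => hC.mem_getD_deleteA_iff hcard hs (by omega))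
    fun t ht u hu h => ?_
  obtain ⟨hts, htS⟩ := mem_erase.1 ht
  obtain ⟨hus, huS⟩ := mem_erase.1 hu
  have := deletePos_le (C := C) (s := s) (t := u)
  have := blockIndex_le_deletePos_add_one (C := C) (s := s) (t := t)
  obtain hlt | heq : blockIndex C t < blockIndex C u ∨ blockIndex C t = blockIndex C u := by
    omega
  · exact hC.lt_of_blockIndex_lt htS huS hlt
  · unfold deletePos at h
    split_ifs at h <;> omega

theorem IsDivision.blockIndex_deleteA (hC : IsDivision C S) (hcard : #S = C.length)
    (hs : AdmissibleA C s) (ht : t ∈ S.erase s) :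
    blockIndex (deleteA C s) t = deletePos C s t := by
  have hlt := hC.deletePos_add_one_lt hcard hs ht
  refine (hC.isDivision_deleteA hcard hs).blockIndex_eq ?_
    ((hC.mem_getD_deleteA_iff hcard hs hlt).2 ⟨ht, rfl⟩)
  rw [length_deleteA (hC.blockIndex_lt (hC.admissibleA_iff.1 hs).1)]
  omega

theorem IsDivision.card_erase_eq_length_deleteA (hC : IsDivision C S) (hcard : #S = C.length)
    (hs : AdmissibleA C s) : #(S.erase s) = (deleteA C s).length := by
  have hsS := (hC.admissibleA_iff.1 hs).1
  rw [card_erase_of_mem hsS, length_deleteA (hC.blockIndex_lt hsS), hcard]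

theorem IsDivision.deletePos_eq_blockIndex_iff (hC : IsDivision C S) (hcard : #S = C.length)
    (hs : AdmissibleA C s) (ht : t ∈ S.erase s) :
    deletePos C s t = blockIndex C t ↔
      blockIndex C t < blockIndex C s ∨ (blockIndex C t = blockIndex C s ∧ s < t) := by
  obtain ⟨hts, htS⟩ := mem_erase.1 ht
  have := hC.lt_of_admissibleA_of_blockIndex_eq_zero hcard hs htS hts
  unfold deletePos
  split_ifs <;> grind

theorem IsDivision.superdiagonal_deleteA (hC : IsDivision C S) (hcard : #S = C.length)
    (hs : AdmissibleA C s) (hsd : Superdiagonal C) : Superdiagonal (deleteA C s) := by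
  have hsS := (hC.admissibleA_iff.1 hs).1
  rw [hC.superdiagonal_iff] at hsd
  rw [(hC.isDivision_deleteA hcard hs).superdiagonal_iff, length_deleteA (hC.blockIndex_lt hsS)]
  intro m hm
  have hbi : ∀ t ∈ S.erase s, blockIndex (deleteA C s) t = deletePos C s t :=
    fun t ht => hC.blockIndex_deleteA hcard hs ht
  by_cases hsm : blockIndex C s < m
  · have hsub : {t ∈ S | blockIndex C t < m + 1}.erase s ⊆
        {t ∈ S.erase s | blockIndex (deleteA C s) t < m} := by
      intro t ht
      obtain ⟨hts, htS, htm⟩ := by simpa only [mem_erase, mem_filter] using ht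
      refine mem_filter.2 ⟨mem_erase.2 ⟨hts, htS⟩, ?_⟩
      rw [hbi t (mem_erase.2 ⟨hts, htS⟩), deletePos]
      split_ifs <;> omega
    have := card_le_card hsub
    rw [card_erase_of_mem (mem_filter.2 ⟨hsS, by omega⟩)] at this
    have := hsd (m + 1) (by omega)
    omega
  · have hsub : {t ∈ S | blockIndex C t < m} ⊆
        {t ∈ S.erase s | blockIndex (deleteA C s) t < m} := by
      intro t ht
      obtain ⟨htS, htm⟩ := mem_filter.1 ht
      have hts : t ≠ s := by rintro rfl; exact hsm htm
      refine mem_filter.2 ⟨mem_erase.2 ⟨hts, htS⟩, ?_⟩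
      rw [hbi t (mem_erase.2 ⟨hts, htS⟩)]
      exact deletePos_le.trans_lt htm
    exact (hsd m (by omega)).trans (card_le_card hsub)

end Deletion

section IndexFunction

variable {C : List (Finset ℕ)} {S : Finset ℕ} {I : ℕ → ℕ} {s t : ℕ} {w : List ℕ}

theorem indexFn_cons_self (C : List (Finset ℕ)) (s : ℕ) (w : List ℕ) :
    indexFn C (s :: w) s = blockIndex C s + 1 := by
  simp [indexFn, blockIndex]

theorem indexFn_cons_of_ne (C : List (Finset ℕ)) (w : List ℕ) (h : t ≠ s) :
    indexFn C (s :: w) t = indexFn (deleteA C s) w t := by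
  simp [indexFn, h]

theorem IsDivision.isIndexFn_iff (hC : IsDivision C S) :
    IsIndexFn C I ↔ ∀ t ∈ S, 1 ≤ I t ∧ I t ≤ blockIndex C t + 1 := by
  refine ⟨fun hI t ht => hI _ (hC.blockIndex_lt ht) t (hC.mem_getD_blockIndex ht),
    fun hI k hk t ht => ?_⟩
  obtain ⟨htS, rfl⟩ := (hC.mem_getD_iff hk).1 ht
  exact hI t htS

theorem IsDivision.eq_empty_of_isCPermA_nil (hC : IsDivision C S) (h : IsCPermA C []) :
    S = ∅ := by
  refine eq_empty_of_forall_notMem fun t ht => ?_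
  have hempty := h _ (List.getElem_mem (hC.blockIndex_lt ht))
  have := hC.mem_getD_blockIndex ht
  rw [List.getD_eq_getElem _ _ (hC.blockIndex_lt ht), hempty] at this
  exact notMem_empty t this

theorem IsDivision.isIndexFn_indexFn (hC : IsDivision C S) (hcard : #S = C.length)
    (hw : IsCPermA C w) : IsIndexFn C (indexFn C w) := by
  induction w generalizing C S with
  | nil => simp [hC.isIndexFn_iff, hC.eq_empty_of_isCPermA_nil hw]
  | cons s v ih =>
    obtain ⟨hs, hv⟩ := hw
    have hdiv := hC.isDivision_deleteA hcard hs
    have hv := hdiv.isIndexFn_iff.1 (ih hdiv (hC.card_erase_eq_length_deleteA hcard hs) hv)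
    rw [hC.isIndexFn_iff]
    intro t ht
    by_cases hts : t = s
    · rw [hts, indexFn_cons_self]
      omega
    · have htS : t ∈ S.erase s := mem_erase.2 ⟨hts, ht⟩
      rw [indexFn_cons_of_ne C v hts]
      have := hv t htS
      rw [hC.blockIndex_deleteA hcard hs htS] at this
      have := deletePos_le (C := C) (s := s) (t := t)
      omega

theorem IsDivision.deletePos_eq_of_indexFn_cons_eq (hC : IsDivision C S)
    (hcard : #S = C.length) (hw : IsCPermA C (s :: w)) (ht : t ∈ S.erase s)
    (h : indexFn C (s :: w) t = blockIndex C t + 1) : deletePos C s t = blockIndex C t := by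
  obtain ⟨hs, hv⟩ := hw
  have hdiv := hC.isDivision_deleteA hcard hs
  have := hdiv.isIndexFn_iff.1
    (hdiv.isIndexFn_indexFn (hC.card_erase_eq_length_deleteA hcard hs) hv) t ht
  rw [hC.blockIndex_deleteA hcard hs ht] at this
  rw [indexFn_cons_of_ne C w (mem_erase.1 ht).1] at h
  have := deletePos_le (C := C) (s := s) (t := t)
  omega

theorem IsDivision.eq_of_indexFn_eq (hC : IsDivision C S) (hcard : #S = C.length) {w' : List ℕ}
    (hw : IsCPermA C w) (hw' : IsCPermA C w') (h : ∀ t ∈ S, indexFn C w t = indexFn C w' t) :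
    w = w' := by
  induction w generalizing w' C S with
  | nil =>
    cases w' with
    | nil => rfl
    | cons s' v' =>
      have := (hC.admissibleA_iff.1 hw'.1).1
      simp [hC.eq_empty_of_isCPermA_nil hw] at this
  | cons s v ih =>
    cases w' with
    | nil =>
      have := (hC.admissibleA_iff.1 hw.1).1
      simp [hC.eq_empty_of_isCPermA_nil hw'] at this
    | cons s' v' =>
      have hsS := (hC.admissibleA_iff.1 hw.1).1
      have hs'S := (hC.admissibleA_iff.1 hw'.1).1
      obtain rfl : s = s' := by
        by_contra hne
        have hs : s ∈ S.erase s' := mem_erase.2 ⟨hne, hsS⟩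
        have hs' : s' ∈ S.erase s := mem_erase.2 ⟨Ne.symm hne, hs'S⟩
        have h₁ := hC.deletePos_eq_of_indexFn_cons_eq hcard hw' hs
          (by rw [← h s hsS, indexFn_cons_self])
        have h₂ := hC.deletePos_eq_of_indexFn_cons_eq hcard hw hs'
          (by rw [h s' hs'S, indexFn_cons_self])
        rw [hC.deletePos_eq_blockIndex_iff hcard hw'.1 hs] at h₁
        rw [hC.deletePos_eq_blockIndex_iff hcard hw.1 hs'] at h₂
        omega
      congr 1
      refine ih (hC.isDivision_deleteA hcard hw.1) (hC.card_erase_eq_length_deleteA hcard hw.1)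
        hw.2 hw'.2 fun t ht => ?_
      have hts := (mem_erase.1 ht).1
      rw [← indexFn_cons_of_ne C v hts, ← indexFn_cons_of_ne C v' hts]
      exact h t (mem_of_mem_erase ht)

theorem IsDivision.le_card_filter_indexFn_le (hC : IsDivision C S) (hcard : #S = C.length)
    (hw : IsCPermA C w) {m : ℕ} (hm : m ≤ C.length) :
    m ≤ #{t ∈ S | indexFn C w t ≤ m} := by
  induction w generalizing C S m with
  | nil => simp_all [hC.eq_empty_of_isCPermA_nil hw]
  | cons s v ih =>
    have hI := hC.isIndexFn_iff.1 (hC.isIndexFn_indexFn hcard hw)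
    obtain hm | hm := hm.eq_or_lt
    · rw [filter_true_of_mem fun t ht => ?_, hcard, hm]
      have := hI t ht
      have := hC.blockIndex_lt ht
      omega
    · have hsub : {t ∈ S.erase s | indexFn (deleteA C s) v t ≤ m} ⊆
          {t ∈ S | indexFn C (s :: v) t ≤ m} := by
        intro t ht
        obtain ⟨hte, htm⟩ := mem_filter.1 ht
        rw [← indexFn_cons_of_ne C v (mem_erase.1 hte).1] at htm
        exact mem_filter.2 ⟨mem_of_mem_erase hte, htm⟩
      have hlen := hC.card_erase_eq_length_deleteA hcard hw.1
      refine le_trans ?_ (card_le_card hsub)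
      exact ih (hC.isDivision_deleteA hcard hw.1) hlen hw.2
        (by rw [← hlen, card_erase_of_mem (hC.admissibleA_iff.1 hw.1).1]; omega)

theorem IsDivision.superdiagonal_of_indexFn_eq (hC : IsDivision C S) (hcard : #S = C.length)
    (hw : IsCPermA C w) (h : ∀ t ∈ S, indexFn C w t = blockIndex C t + 1) :
    Superdiagonal C := by
  rw [hC.superdiagonal_iff]
  intro m hm
  convert hC.le_card_filter_indexFn_le hcard hw hm using 2
  refine filter_congr fun t ht => ?_
  rw [h t ht]
  omega

theorem IsDivision.isIndexFn_deleteA (hC : IsDivision C S) (hcard : #S = C.length)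
    (hs : AdmissibleA C s) (hI : IsIndexFn C I)
    (htight : ∀ t ∈ S.erase s, I t = blockIndex C t + 1 → deletePos C s t = blockIndex C t) :
    IsIndexFn (deleteA C s) I := by
  rw [(hC.isDivision_deleteA hcard hs).isIndexFn_iff]
  intro t ht
  rw [hC.blockIndex_deleteA hcard hs ht]
  have := hC.isIndexFn_iff.1 hI t (mem_of_mem_erase ht)
  have := blockIndex_le_deletePos_add_one (C := C) (s := s) (t := t)
  by_cases h : I t = blockIndex C t + 1
  · have := htight t ht h
    omega
  · omega

theorem IsDivision.card_getD_last_le_one (hC : IsDivision C S) (hcard : #S = C.length)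
    (hsd : Superdiagonal C) : #(C.getD (C.length - 1) ∅) ≤ 1 := by
  have hall := hC.card_filter_blockIndex_lt le_rfl
  rw [filter_true_of_mem fun t ht => hC.blockIndex_lt ht, hcard] at hall
  rcases hn : C.length with _ | n
  · simp [List.length_eq_zero_iff.1 hn]
  rw [hn, sum_range_succ] at hall
  have := hsd n (by omega)
  rw [Nat.add_sub_cancel]
  omega

theorem IsDivision.exists_admissibleA_of_superdiagonal (hC : IsDivision C S)
    (hcard : #S = C.length) (hsd : Superdiagonal C) (hI : IsIndexFn C I) (hn : 0 < C.length) :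
    ∃ s, AdmissibleA C s ∧ I s = blockIndex C s + 1 ∧
      ∀ t ∈ S.erase s, I t = blockIndex C t + 1 → deletePos C s t = blockIndex C t := by
  rw [hC.isIndexFn_iff] at hI
  obtain ⟨t₀, ht₀⟩ : (C.getD 0 ∅).Nonempty := by
    have := hsd 1 hn
    rw [sum_range_one] at this
    exact card_pos.1 this
  obtain ⟨ht₀S, ht₀0⟩ := (hC.mem_getD_iff hn).1 ht₀
  have htight₀ : ∀ t ∈ S, blockIndex C t = 0 → I t = blockIndex C t + 1 := fun t ht h => by
    have := hI t ht
    omega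
  -- the tight elements are ordered by block, and within a block downwards
  obtain ⟨s, hs, hmax⟩ := exists_max_image {t ∈ S | I t = blockIndex C t + 1}
    (fun t => toLex (blockIndex C t, OrderDual.toDual t))
    ⟨t₀, mem_filter.2 ⟨ht₀S, htight₀ t₀ ht₀S ht₀0⟩⟩
  obtain ⟨hsS, hsI⟩ := mem_filter.1 hs
  replace hmax : ∀ t ∈ S, I t = blockIndex C t + 1 →
      blockIndex C t < blockIndex C s ∨ (blockIndex C t = blockIndex C s ∧ s ≤ t) :=
    fun t ht htI => by simpa [Prod.Lex.toLex_le_toLex] using hmax t (mem_filter.2 ⟨ht, htI⟩)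
  refine ⟨s, hC.admissibleA_iff.2 ⟨hsS, ?_⟩, hsI, fun t ht htI => ?_⟩
  · have hs := hC.blockIndex_lt hsS
    by_cases h0 : blockIndex C s = 0
    · refine .inl ⟨h0, fun t ht h => ?_⟩
      have := hmax t ht (htight₀ t ht h)
      omega
    by_cases hlast : blockIndex C s + 1 = C.length
    · refine .inr (.inl ⟨hlast, fun t ht h => ?_⟩)
      have hlastS := hC.card_getD_last_le_one hcard hsd
      rw [← hC.filter_blockIndex_eq (by omega), card_le_one] at hlastS
      exact (hlastS t (mem_filter.2 ⟨ht, by omega⟩) s (mem_filter.2 ⟨hsS, by omega⟩)).le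
    · exact .inr (.inr ⟨by omega, by omega⟩)
  · have := hmax t (mem_of_mem_erase ht) htI
    have := (mem_erase.1 ht).1
    unfold deletePos
    rw [if_pos (by omega)]

theorem IsDivision.exists_isCPermA_indexFn_eq (hC : IsDivision C S) (hcard : #S = C.length)
    (hsd : Superdiagonal C) (hI : IsIndexFn C I) :
    ∃ w, IsCPermA C w ∧ ∀ t ∈ S, indexFn C w t = I t := by
  obtain ⟨n, hn⟩ : ∃ n, C.length = n := ⟨_, rfl⟩
  induction n generalizing C S with
  | zero =>
    refine ⟨[], fun B hB => ?_, fun t ht => ?_⟩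
    · simp [List.length_eq_zero_iff.1 hn] at hB
    · simp [card_eq_zero.1 (hcard.trans hn)] at ht
  | succ n ih =>
    obtain ⟨s, hs, hsI, htight⟩ :=
      hC.exists_admissibleA_of_superdiagonal hcard hsd hI (by omega)
    obtain ⟨v, hv, hvI⟩ := ih (hC.isDivision_deleteA hcard hs)
      (hC.card_erase_eq_length_deleteA hcard hs) (hC.superdiagonal_deleteA hcard hs hsd)
      (hC.isIndexFn_deleteA hcard hs hI htight)
      (by rw [length_deleteA (hC.blockIndex_lt (hC.admissibleA_iff.1 hs).1), hn]; rfl)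
    refine ⟨s :: v, ⟨hs, hv⟩, fun t ht => ?_⟩
    by_cases hts : t = s
    · rw [hts, indexFn_cons_self, hsI]
    · rw [indexFn_cons_of_ne C v hts]
      exact hvI t (mem_erase.2 ⟨hts, ht⟩)

end IndexFunction

section Counting

variable {C : List (Finset ℕ)} {S : Finset ℕ}

/-- `I_w^C`, shifted down by one. -/
def indexVector (hC : IsDivision C S) (hcard : #S = C.length) (w : {w // IsCPermA C w})
    (t : S) : Fin (blockIndex C t + 1) :=
  ⟨indexFn C w t - 1, by
    have := hC.isIndexFn_iff.1 (hC.isIndexFn_indexFn hcard w.2) t t.2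
    omega⟩

theorem IsDivision.card_indexVectors (hC : IsDivision C S) :
    Nat.card ((t : S) → Fin (blockIndex C t + 1)) =
      ∏ k ∈ range C.length, (k + 1) ^ #(C.getD k ∅) := by
  rw [Nat.card_eq_fintype_card, Fintype.card_pi]
  simp only [Fintype.card_fin]
  rw [prod_coe_sort S (fun t => blockIndex C t + 1), hC.prod_blockIndex_add_one]

theorem indexVector_injective (hC : IsDivision C S) (hcard : #S = C.length) :
    Function.Injective (indexVector hC hcard) := by
  intro w w' h
  refine Subtype.ext (hC.eq_of_indexFn_eq hcard w.2 w'.2 fun t ht => ?_)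
  have := congrArg Fin.val (congrFun h ⟨t, ht⟩)
  have := hC.isIndexFn_iff.1 (hC.isIndexFn_indexFn hcard w.2) t ht
  have := hC.isIndexFn_iff.1 (hC.isIndexFn_indexFn hcard w'.2) t ht
  simp only [indexVector] at *
  omega

theorem indexVector_surjective_iff (hC : IsDivision C S) (hcard : #S = C.length) :
    Function.Surjective (indexVector hC hcard) ↔ Superdiagonal C := by
  constructor
  · intro h
    obtain ⟨w, hw⟩ := h fun t => Fin.last _
    refine hC.superdiagonal_of_indexFn_eq hcard w.2 fun t ht => ?_
    have := congrArg Fin.val (congrFun hw ⟨t, ht⟩)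
    have := hC.isIndexFn_iff.1 (hC.isIndexFn_indexFn hcard w.2) t ht
    simp only [indexVector, Fin.val_last] at *
    omega
  · intro hsd q
    let I t := if ht : t ∈ S then (q ⟨t, ht⟩ : ℕ) + 1 else 0
    have hI : IsIndexFn C I := hC.isIndexFn_iff.2 fun t ht => by
      have : (q ⟨t, ht⟩ : ℕ) < blockIndex C t + 1 := (q ⟨t, ht⟩).isLt
      simp only [I, dif_pos ht]
      omega
    obtain ⟨w, hw, hwI⟩ := hC.exists_isCPermA_indexFn_eq hcard hsd hI
    refine ⟨⟨w, hw⟩, funext fun t => Fin.ext ?_⟩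
    simp [indexVector, hwI t t.2, I]

theorem IsDivision.card_isCPermA_le (hC : IsDivision C S) (hcard : #S = C.length) :
    Nat.card {w // IsCPermA C w} ≤ ∏ k ∈ range C.length, (k + 1) ^ #(C.getD k ∅) :=
  hC.card_indexVectors ▸ Nat.card_le_card_of_injective _ (indexVector_injective hC hcard)

theorem IsDivision.card_isCPermA_eq_iff (hC : IsDivision C S) (hcard : #S = C.length) :
    Nat.card {w // IsCPermA C w} = ∏ k ∈ range C.length, (k + 1) ^ #(C.getD k ∅) ↔
      Superdiagonal C := by
  rw [← indexVector_surjective_iff hC hcard, ← hC.card_indexVectors]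
  have hinj := indexVector_injective hC hcard
  exact ⟨fun h => ((Nat.bijective_iff_injective_and_card _).2 ⟨hinj, h⟩).2,
    fun h => Nat.card_eq_of_bijective _ ⟨hinj, h⟩⟩

end Counting

/-- `w ↦ I_w^C` is an injection from `C`-permutations to index functions
of `C`, a bijection iff `C` is superdiagonal; hence the number of `C`-permutations is
at most `1^{|C₁|} 2^{|C₂|} ⋯ n^{|C_n|}` with equality iff `C` is superdiagonal. -/
theorem indexFn_injection (n : ℕ) (S : Finset ℕ) (C : List (Finset ℕ))
    (hS : S.card = n) (hlen : C.length = n) (hC : IsDivision C S) :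
    (∀ w w' : List ℕ, IsCPermA C w → IsCPermA C w' →
      (∀ s ∈ S, indexFn C w s = indexFn C w' s) → w = w') ∧
    ((∀ I : ℕ → ℕ, IsIndexFn C I →
        ∃ w : List ℕ, IsCPermA C w ∧ ∀ s ∈ S, indexFn C w s = I s) ↔
      Superdiagonal C) ∧
    Nat.card {w : List ℕ // IsCPermA C w} ≤
      ∏ i ∈ Finset.range n, (i + 1) ^ (C.getD i ∅).card ∧
    (Nat.card {w : List ℕ // IsCPermA C w} =
        ∏ i ∈ Finset.range n, (i + 1) ^ (C.getD i ∅).card ↔ Superdiagonal C) := by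
  subst hlen
  refine ⟨fun w w' hw hw' h => hC.eq_of_indexFn_eq hS hw hw' h,
    ⟨fun h => ?_, fun hsd I hI => hC.exists_isCPermA_indexFn_eq hS hsd hI⟩,
    hC.card_isCPermA_le hS, hC.card_isCPermA_eq_iff hS⟩
  obtain ⟨w, hw, hwI⟩ := h _ (hC.isIndexFn_iff.2 fun t _ => ⟨le_add_self, le_rfl⟩)
  exact hC.superdiagonal_of_indexFn_eq hS hw hwI

end MixedEulerian
end

section
/- Let C = (C_1,...,C_n) be a division of a totally ordered n-element set. If C is superdiagonal (|C_1|+...+|C_i| ≥ i for all i), then the number of type B C-permutations equals 1^{|C_1|} 2^{|C_2|} ... n^{|C_n|}; and if C is subdiagonal (|C_n|+...+|C_{n-i+1}| ≥ i for all i), then the number of type B C-permutations equals n!. -/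
open scoped Pointwise
open MeasureTheory Nat

namespace MixedEulerian

/-!
Call `e(V) = ∑_{B ∈ V} (|B| - 1)` the excess of a list of blocks. A division of an `n`-set into
`n` blocks has excess `0`, so superdiagonality says that every suffix has excess `≤ 0` and
subdiagonality that every suffix has excess `≥ 0`. A type B deletion merges a window of two or
three consecutive blocks into one block fewer, and every suffix excess of the result lies between
two suffix excesses of the original; hence both conditions survive deletion and the number `N(C)`
of type B `C`-permutations can be computed from `N(C) = ∑_{s admissible} N(C^s)` by induction.

In the subdiagonal case `|C₁| ≤ 1`, so all `n` elements are admissible and `N(C) = n · (n-1)!`.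
In the superdiagonal case `|C₁| ≥ 1` and `|C_n| ≤ 1`; the admissible elements are `min C₁` and the
elements of `C₂, …, C_n`. With `T_i = ∏_{j ≤ i} j^{|C_j|} ∏_{j > i} (j-1)^{|C_j|}`, deleting
`min C₁` has weight `T₁`, and by `x^m + ∑_{s ∈ B} x^{#{t < s}} (x+1)^{#{t > s}} = (x+1)^m`
(for `m = |B|`) the weights of the deletions of the elements of `C_i` add up to `T_i - T_{i-1}`,
so everything telescopes to `T_n = ∏ j^{|C_j|}`.
-/
def BlockLT (A B : Finset ℕ) : Prop := ∀ a ∈ A, ∀ b ∈ B, a < b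

namespace BlockLT

variable {A A' B B' : Finset ℕ}

theorem disjoint (h : BlockLT A B) : Disjoint A B :=
  Finset.disjoint_left.2 fun a ha ha' => (h a ha a ha').false

theorem mono (h : BlockLT A B) (hA : A' ⊆ A) (hB : B' ⊆ B) : BlockLT A' B' :=
  fun a ha b hb => h a (hA ha) b (hB hb)

theorem union_left (h : BlockLT A B) (h' : BlockLT A' B) : BlockLT (A ∪ A') B := by
  intro a ha b hb
  rcases Finset.mem_union.1 ha with ha | ha
  exacts [h a ha b hb, h' a ha b hb]

theorem union_right (h : BlockLT A B) (h' : BlockLT A B') : BlockLT A (B ∪ B') := by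
  intro a ha b hb
  rcases Finset.mem_union.1 hb with hb | hb
  exacts [h a ha b hb, h' a ha b hb]

theorem filter_lt_filter_gt (B : Finset ℕ) (s : ℕ) :
    BlockLT (B.filter (· < s)) (B.filter (s < ·)) := by
  intro a ha b hb
  simp only [Finset.mem_filter] at ha hb
  omega

end BlockLT

theorem notMem_of_pairwise_blockLT {X Y : List (Finset ℕ)} {B : Finset ℕ} {s : ℕ}
    (hC : (X ++ B :: Y).Pairwise BlockLT) (hs : s ∈ B) : ∀ b ∈ X, s ∉ b :=
  fun b hb hsb => (List.pairwise_append.1 hC).2.2 b hb B List.mem_cons_self s hsb s hs |>.false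

theorem blockLT_of_pairwise_mid {X Y : List (Finset ℕ)} {P B Y₀ : Finset ℕ}
    (hC : (X ++ P :: B :: Y₀ :: Y).Pairwise BlockLT) :
    BlockLT P B ∧ BlockLT P Y₀ ∧ BlockLT B Y₀ := by
  have hK : [P, B, Y₀].Pairwise BlockLT := (List.pairwise_append.1 hC).2.1.sublist (by simp)
  simp only [List.pairwise_cons, List.mem_cons, List.not_mem_nil, forall_eq_or_imp, forall_eq,
    or_false] at hK
  exact ⟨hK.1.1, hK.1.2, hK.2.1⟩

def support (C : List (Finset ℕ)) : Finset ℕ := C.foldr (· ∪ ·) ∅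

@[simp] theorem support_nil : support [] = ∅ := rfl

@[simp] theorem support_cons (B : Finset ℕ) (C : List (Finset ℕ)) :
    support (B :: C) = B ∪ support C := rfl

theorem mem_support {C : List (Finset ℕ)} {x : ℕ} : x ∈ support C ↔ ∃ B ∈ C, x ∈ B := by
  induction C with
  | nil => simp
  | cons B C ih => simp [ih]

theorem sum_support {M : Type*} [AddCommMonoid M] {C : List (Finset ℕ)}
    (hC : C.Pairwise Disjoint) (f : ℕ → M) :
    ∑ x ∈ support C, f x = (C.map fun B => ∑ x ∈ B, f x).sum := by
  induction C with
  | nil => simp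
  | cons B C ih =>
    rw [List.pairwise_cons] at hC
    have hdisj : Disjoint B (support C) := Finset.disjoint_left.2 fun x hxB hxC => by
      obtain ⟨B', hB', hxB'⟩ := mem_support.1 hxC
      exact Finset.disjoint_left.1 (hC.1 B' hB') hxB hxB'
    rw [support_cons, Finset.sum_union hdisj, ih hC.2, List.map_cons, List.sum_cons]

theorem card_support {C : List (Finset ℕ)} (hC : C.Pairwise Disjoint) :
    (support C).card = (C.map Finset.card).sum := by
  simpa using sum_support hC (fun _ => (1 : ℕ))

def excess (C : List (Finset ℕ)) : ℤ := ((C.map Finset.card).sum : ℤ) - C.length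

@[simp] theorem excess_nil : excess [] = 0 := rfl

@[simp] theorem excess_cons (B : Finset ℕ) (C : List (Finset ℕ)) :
    excess (B :: C) = B.card - 1 + excess C := by
  simp only [excess, List.map_cons, List.sum_cons, List.length_cons]
  push_cast
  ring

@[simp] theorem excess_append (C D : List (Finset ℕ)) :
    excess (C ++ D) = excess C + excess D := by
  simp only [excess, List.map_append, List.sum_append, List.length_append]
  push_cast
  ring

@[simp] theorem excess_reverse (C : List (Finset ℕ)) : excess C.reverse = excess C := by
  simp [excess]

def weight : List (Finset ℕ) → ℕ → ℕ
  | [], _ => 1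
  | B :: C, k => k ^ B.card * weight C (k + 1)

@[simp] theorem weight_nil (k : ℕ) : weight [] k = 1 := rfl

@[simp] theorem weight_cons (B : Finset ℕ) (C : List (Finset ℕ)) (k : ℕ) :
    weight (B :: C) k = k ^ B.card * weight C (k + 1) := rfl

theorem weight_append (C D : List (Finset ℕ)) (k : ℕ) :
    weight (C ++ D) k = weight C k * weight D (k + C.length) := by
  induction C generalizing k with
  | nil => simp
  | cons B C ih => simp [ih, Nat.add_right_comm _ 1, Nat.add_assoc, mul_assoc]

theorem weight_eq_prod (C : List (Finset ℕ)) (k : ℕ) :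
    weight C k = ∏ i ∈ Finset.range C.length, (k + i) ^ (C.getD i ∅).card := by
  induction C generalizing k with
  | nil => simp
  | cons B C ih =>
    rw [weight_cons, ih, List.length_cons, Finset.prod_range_succ']
    simp [Nat.add_right_comm _ 1, Nat.add_assoc, mul_comm]

theorem sum_range_card_getD {C : List (Finset ℕ)} {i : ℕ} (hi : i ≤ C.length) :
    ∑ j ∈ Finset.range i, (C.getD j ∅).card = ((C.map Finset.card).take i).sum := by
  induction i with
  | zero => simp
  | succ i ih =>
    rw [Finset.sum_range_succ, ih (by omega), List.sum_take_succ _ _ (by simpa),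
      List.getElem_map, List.getD_eq_getElem _ _ hi]

theorem superdiagonal_iff {C : List (Finset ℕ)} :
    Superdiagonal C ↔ ∀ V, V <+: C → 0 ≤ excess V := by
  have key : ∀ i ≤ C.length,
      excess (C.take i) = ((∑ j ∈ Finset.range i, (C.getD j ∅).card : ℕ) : ℤ) - i := by
    intro i hi
    rw [sum_range_card_getD hi, excess, List.map_take, List.length_take_of_le hi]
  constructor
  · intro h V hV
    rw [List.prefix_iff_eq_take.1 hV, key _ hV.length_le, sub_nonneg]
    exact_mod_cast h _ hV.length_le
  · intro h i hi
    have := key i hi ▸ h _ (List.take_prefix i C)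
    exact_mod_cast sub_nonneg.1 this

theorem subdiagonal_iff_superdiagonal_reverse {C : List (Finset ℕ)} :
    Subdiagonal C ↔ Superdiagonal C.reverse := by
  unfold Subdiagonal Superdiagonal
  rw [List.length_reverse]
  refine forall₂_congr fun i hi => iff_of_eq (congrArg _ (Finset.sum_congr rfl fun j hj => ?_))
  rw [List.getD_reverse j (by simp at hj; omega)]

theorem subdiagonal_iff {C : List (Finset ℕ)} : Subdiagonal C ↔ ∀ V, V <:+ C → 0 ≤ excess V := by
  rw [subdiagonal_iff_superdiagonal_reverse, superdiagonal_iff]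
  refine ⟨fun h V hV => ?_, fun h V hV => ?_⟩
  · simpa using h V.reverse (List.reverse_prefix.2 hV)
  · simpa using h V.reverse (List.reverse_prefix.1 (by rwa [List.reverse_reverse]))

theorem excess_suffix_nonpos_of_superdiagonal {C : List (Finset ℕ)} (hex : excess C = 0)
    (h : Superdiagonal C) : ∀ V, V <:+ C → excess V ≤ 0 := by
  rintro V ⟨U, rfl⟩
  have := superdiagonal_iff.1 h U (List.prefix_append U V)
  simp only [excess_append] at hex
  linarith

theorem suffix_append_cases {α : Type*} {V L₁ L₂ : List α} (h : V <:+ L₁ ++ L₂) :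
    V <:+ L₂ ∨ ∃ V₁, V₁ <:+ L₁ ∧ V = V₁ ++ L₂ := by
  obtain ⟨U, hU⟩ := h
  rcases List.append_eq_append_iff.1 hU with ⟨V₁, rfl, rfl⟩ | ⟨U₂, rfl, rfl⟩
  · exact Or.inr ⟨V₁, List.suffix_append U V₁, rfl⟩
  · exact Or.inl (List.suffix_append U₂ V)

def MergesInto (C D : List (Finset ℕ)) : Prop :=
  ∃ X K M Y, C = X ++ K ++ Y ∧ D = X ++ M ++ Y ∧ M.length + 1 = K.length ∧
    M.Pairwise BlockLT ∧ (∀ b ∈ M, b ⊆ support K) ∧ excess M = excess K ∧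
    ∀ V, V <:+ M → ∃ U U', U <:+ K ∧ U' <:+ K ∧ excess U' ≤ excess V ∧ excess V ≤ excess U

namespace MergesInto

variable {C D : List (Finset ℕ)}

theorem length_add_one (h : MergesInto C D) : D.length + 1 = C.length := by
  obtain ⟨X, K, M, Y, rfl, rfl, hlen, -⟩ := h
  simp only [List.length_append]
  omega

theorem excess_eq (h : MergesInto C D) : excess D = excess C := by
  obtain ⟨X, K, M, Y, rfl, rfl, -, -, -, hex, -⟩ := h
  simp [hex]

theorem pairwise (h : MergesInto C D) (hC : C.Pairwise BlockLT) : D.Pairwise BlockLT := by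
  obtain ⟨X, K, M, Y, rfl, rfl, -, hM, hsub, -⟩ := h
  have below : ∀ a, (∀ k ∈ K, BlockLT a k) → ∀ b ∈ M, BlockLT a b := fun a ha b hb x hx y hy => by
    obtain ⟨k, hk, hyk⟩ := mem_support.1 (hsub b hb hy)
    exact ha k hk x hx y hyk
  have above : ∀ a, (∀ k ∈ K, BlockLT k a) → ∀ b ∈ M, BlockLT b a := fun a ha b hb x hx y hy => by
    obtain ⟨k, hk, hxk⟩ := mem_support.1 (hsub b hb hx)
    exact ha k hk x hxk y hy
  simp only [List.pairwise_append, List.mem_append] at hC ⊢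
  obtain ⟨⟨hX, -, hXK⟩, hY, hXKY⟩ := hC
  refine ⟨⟨hX, hM, fun a ha => below a fun k hk => hXK a ha k hk⟩, hY, ?_⟩
  rintro a (ha | ha) b hb
  · exact hXKY a (Or.inl ha) b hb
  · exact above b (fun k hk => hXKY k (Or.inr hk) b hb) a ha

theorem exists_suffix_excess_bounds (h : MergesInto C D) {V : List (Finset ℕ)} (hV : V <:+ D) :
    ∃ U U', U <:+ C ∧ U' <:+ C ∧ excess U' ≤ excess V ∧ excess V ≤ excess U := by
  obtain ⟨X, K, M, Y, rfl, rfl, -, -, -, hex, hwin⟩ := h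
  rcases suffix_append_cases hV with hV | ⟨V₁, hV₁, rfl⟩
  · have hVC : V <:+ X ++ K ++ Y := hV.trans (List.suffix_append _ _)
    exact ⟨V, V, hVC, hVC, le_rfl, le_rfl⟩
  rcases suffix_append_cases hV₁ with hV₁ | ⟨V₂, hV₂, rfl⟩
  · obtain ⟨U, U', hU, hU', h₁, h₂⟩ := hwin V₁ hV₁
    refine ⟨U ++ Y, U' ++ Y, ?_, ?_, by simpa using h₁, by simpa using h₂⟩ <;>
      exact List.suffix_append_self_iff.2 (List.suffix_append_of_suffix (by assumption))
  · refine ⟨V₂ ++ K ++ Y, V₂ ++ K ++ Y, ?_, ?_, by simp [hex], by simp [hex]⟩ <;>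
      exact List.suffix_append_self_iff.2 (List.suffix_append_self_iff.2 hV₂)

end MergesInto

theorem erase_eq_filter_lt_union_filter_gt (B : Finset ℕ) (s : ℕ) :
    B.erase s = B.filter (· < s) ∪ B.filter (s < ·) := by
  ext t
  by_cases ht : t ∈ B <;> simp [ht]

theorem card_filter_lt_add_card_filter_gt {B : Finset ℕ} {s : ℕ} (hs : s ∈ B) :
    (B.filter (· < s)).card + (B.filter (s < ·)).card + 1 = B.card := by
  rw [← Finset.card_union_of_disjoint (BlockLT.filter_lt_filter_gt B s).disjoint,
    ← erase_eq_filter_lt_union_filter_gt, Finset.card_erase_add_one hs]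

theorem findIdx_mem_append_cons {X Y : List (Finset ℕ)} {B : Finset ℕ} {s : ℕ}
    (hX : ∀ b ∈ X, s ∉ b) (hs : s ∈ B) :
    (X ++ B :: Y).findIdx (fun b => decide (s ∈ b)) = X.length := by
  induction X with
  | nil => simp [List.findIdx_cons, hs]
  | cons P X ih => simp_all [List.findIdx_cons]

theorem deleteB_singleton {B : Finset ℕ} {s : ℕ} (hs : s ∈ B) : deleteB [B] s = [] := by
  simp [deleteB, deleteA, List.findIdx_cons, hs]

theorem deleteB_cons_cons {B Y₀ : Finset ℕ} {Y : List (Finset ℕ)} {s : ℕ}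
    (hs : s ∈ B) (hmin : ∀ t ∈ B, s ≤ t) :
    deleteB (B :: Y₀ :: Y) s = (B.erase s ∪ Y₀) :: Y := by
  have hhi : B.filter (s < ·) = B.erase s := by
    ext t
    simp only [Finset.mem_filter, Finset.mem_erase]
    exact ⟨fun h => ⟨h.2.ne', h.1⟩, fun h => ⟨h.2, (hmin t h.2).lt_of_ne' h.1⟩⟩
  simp [deleteB, deleteA, List.findIdx_cons, hs, hhi]

theorem deleteB_last {X : List (Finset ℕ)} {P B : Finset ℕ} {s : ℕ}
    (hX : ∀ b ∈ X ++ [P], s ∉ b) (hs : s ∈ B) :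
    deleteB (X ++ [P, B]) s = X ++ [P ∪ B.erase s] := by
  have h := findIdx_mem_append_cons (Y := []) hX hs
  simp only [List.append_assoc, List.cons_append, List.nil_append, List.length_append,
    List.length_cons, List.length_nil] at h
  simp [deleteB, h, List.getD_eq_getElem?_getD]

theorem deleteB_mid {X : List (Finset ℕ)} {P B Y₀ : Finset ℕ} {Y : List (Finset ℕ)} {s : ℕ}
    (hX : ∀ b ∈ X ++ [P], s ∉ b) (hs : s ∈ B) :
    deleteB (X ++ P :: B :: Y₀ :: Y) s =
      X ++ (P ∪ B.filter (· < s)) :: (B.filter (s < ·) ∪ Y₀) :: Y := by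
  have h := findIdx_mem_append_cons (Y := Y₀ :: Y) hX hs
  simp only [List.append_assoc, List.cons_append, List.nil_append, List.length_append,
    List.length_cons, List.length_nil] at h
  simp [deleteB, deleteA, h, List.getD_eq_getElem?_getD, List.drop_append,
    List.getElem?_append_right (Nat.le_add_right X.length 2),
    show X.length + 1 + 2 - X.length = 3 by omega,
    List.drop_eq_nil_of_le (show X.length ≤ X.length + 1 + 2 by omega),
    show ¬X.length + (Y.length + 1 + 1 + 1) ≤ 1 by omega]

theorem mergesInto_pair (X Y : List (Finset ℕ)) {A B M : Finset ℕ} (hM : M ⊆ A ∪ B)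
    (hcard : M.card + 1 = A.card + B.card) :
    MergesInto (X ++ [A, B] ++ Y) (X ++ [M] ++ Y) := by
  refine ⟨X, [A, B], [M], Y, rfl, rfl, rfl, List.pairwise_singleton _ _,
    by simpa using hM, ?_, fun V hV => ?_⟩
  · simp only [excess_cons, excess_nil]
    linarith [(congrArg (Nat.cast (R := ℤ)) hcard).trans (Nat.cast_add _ _)]
  rcases List.suffix_cons_iff.1 hV with rfl | hV
  · refine ⟨[A, B], [A, B], List.suffix_refl _, List.suffix_refl _, ?_, ?_⟩ <;>
      · simp only [excess_cons, excess_nil]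
        omega
  · rw [List.suffix_nil.1 hV]
    exact ⟨[], [], List.nil_suffix, List.nil_suffix, le_rfl, le_rfl⟩

theorem mergesInto_split {X Y : List (Finset ℕ)} {P B Y₀ : Finset ℕ} {s : ℕ}
    (hC : (X ++ P :: B :: Y₀ :: Y).Pairwise BlockLT) (hs : s ∈ B) :
    MergesInto (X ++ P :: B :: Y₀ :: Y)
      (X ++ (P ∪ B.filter (· < s)) :: (B.filter (s < ·) ∪ Y₀) :: Y) := by
  obtain ⟨hPB, hPY₀, hBY₀⟩ := blockLT_of_pairwise_mid hC
  have hlo := Finset.filter_subset (· < s) B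
  have hhi := Finset.filter_subset (s < ·) B
  have hcard := card_filter_lt_add_card_filter_gt hs
  have hcard₁ := Finset.card_union_of_disjoint (hPB.mono le_rfl hlo).disjoint
  have hcard₂ := Finset.card_union_of_disjoint (hBY₀.mono hhi le_rfl).disjoint
  have hex : excess [P ∪ B.filter (· < s), B.filter (s < ·) ∪ Y₀] = excess [P, B, Y₀] := by
    simp only [excess_cons, excess_nil]
    push_cast [hcard₁, hcard₂, ← hcard]
    ring
  refine ⟨X, [P, B, Y₀], [P ∪ B.filter (· < s), B.filter (s < ·) ∪ Y₀], Y, by simp, by simp, rfl,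
    ?_, ?_, ?_, fun V hV => ?_⟩
  · refine List.pairwise_pair.2 ((hPB.mono le_rfl hhi).union_right hPY₀ |>.union_left ?_)
    exact (BlockLT.filter_lt_filter_gt B s).union_right (hBY₀.mono hlo le_rfl)
  · simp only [List.mem_cons, List.not_mem_nil, or_false, forall_eq_or_imp, forall_eq,
      support_cons, support_nil, Finset.union_empty]
    constructor <;> intro x <;> simp only [Finset.mem_union, Finset.mem_filter] <;> tauto
  · exact hex
  · rcases List.suffix_cons_iff.1 hV with rfl | hV
    · exact ⟨_, _, List.suffix_refl _, List.suffix_refl _, hex.ge, hex.le⟩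
    rcases List.suffix_cons_iff.1 hV with rfl | hV
    · refine ⟨[B, Y₀], [Y₀], List.suffix_cons _ _, (List.suffix_cons _ _).trans
        (List.suffix_cons _ _), ?_, ?_⟩ <;>
        · simp only [excess_cons, excess_nil]
          push_cast [hcard₂, ← hcard]
          linarith
    · rw [List.suffix_nil.1 hV]
      exact ⟨[], [], List.nil_suffix, List.nil_suffix, le_rfl, le_rfl⟩

def admissibleSet : List (Finset ℕ) → Finset ℕ
  | [] => ∅
  | B :: C => B.filter (fun s => ∀ t ∈ B, s ≤ t) ∪ support C

theorem mem_admissibleSet {C : List (Finset ℕ)} {s : ℕ} :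
    s ∈ admissibleSet C ↔ AdmissibleB C s := by
  cases C with
  | nil => simp [admissibleSet, AdmissibleB]
  | cons B C =>
    simp only [admissibleSet, Finset.mem_union, Finset.mem_filter, mem_support, AdmissibleB]
    constructor
    · rintro (⟨hs, hmin⟩ | ⟨B', hB', hs⟩)
      · exact ⟨0, by simp, by simpa using hs, Or.inl ⟨rfl, by simpa using hmin⟩⟩
      · obtain ⟨i, hi, rfl⟩ := List.getElem_of_mem hB'
        exact ⟨i + 1, by simpa using hi, by rwa [List.getD_cons_succ, List.getD_eq_getElem _ _ hi],
          Or.inr i.succ_ne_zero⟩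
    · rintro ⟨_ | i, hi, hs, h⟩
      · simp_all
      · have hi : i < C.length := by simpa using hi
        rw [List.getD_cons_succ, List.getD_eq_getElem _ _ hi] at hs
        exact Or.inr ⟨C[i], List.getElem_mem hi, hs⟩

theorem mergesInto_deleteB {C : List (Finset ℕ)} {s : ℕ} (hC : C.Pairwise BlockLT)
    (hex : excess C = 0) (hs : s ∈ admissibleSet C) : MergesInto C (deleteB C s) := by
  rcases C with _ | ⟨B₀, T⟩
  · simp [admissibleSet] at hs
  rcases Finset.mem_union.1 hs with hmin | hT
  · rw [Finset.mem_filter] at hmin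
    rcases T with _ | ⟨Y₀, Y⟩
    · rw [deleteB_singleton hmin.1]
      refine ⟨[], [B₀], [], [], rfl, rfl, rfl, List.Pairwise.nil, by simp, hex.symm, ?_⟩
      intro V hV
      rw [List.suffix_nil.1 hV]
      exact ⟨[], [], List.nil_suffix, List.nil_suffix, le_rfl, le_rfl⟩
    · rw [deleteB_cons_cons hmin.1 hmin.2]
      have hB₀Y₀ : BlockLT B₀ Y₀ := List.rel_of_pairwise_cons hC List.mem_cons_self
      refine mergesInto_pair [] Y (Finset.union_subset_union (Finset.erase_subset _ _) le_rfl) ?_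
      rw [Finset.card_union_of_disjoint ((hB₀Y₀.mono (Finset.erase_subset _ _) le_rfl).disjoint)]
      have := Finset.card_erase_add_one hmin.1
      omega
  · obtain ⟨B, hB, hsB⟩ := mem_support.1 hT
    obtain ⟨X₁, Y, rfl⟩ := List.append_of_mem hB
    obtain ⟨X, P, hXP⟩ : ∃ X P, B₀ :: X₁ = X ++ [P] :=
      ⟨_, _, (List.dropLast_append_getLast (List.cons_ne_nil B₀ X₁)).symm⟩
    have hC' : B₀ :: (X₁ ++ B :: Y) = X ++ P :: B :: Y := by
      rw [← List.cons_append, hXP, List.append_assoc, List.singleton_append]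
    rw [hC'] at hC ⊢
    have hX := notMem_of_pairwise_blockLT (X := X ++ [P]) (by simpa using hC) hsB
    rcases Y with _ | ⟨Y₀, Y⟩
    · have hPB : BlockLT P B := List.pairwise_pair.1 (List.pairwise_append.1 hC).2.1
      rw [deleteB_last hX hsB]
      have hcard :=
        Finset.card_union_of_disjoint (hPB.mono le_rfl (Finset.erase_subset s B)).disjoint
      have := Finset.card_erase_add_one hsB
      simpa using mergesInto_pair X [] (Finset.union_subset_union le_rfl
        (Finset.erase_subset s B)) (by omega)
    · rw [deleteB_mid hX hsB]
      exact mergesInto_split hC hsB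

theorem enatCard_sigma {ι : Type*} [Fintype ι] (β : ι → Type*) :
    ENat.card (Σ i, β i) = ∑ i, ENat.card (β i) := by
  by_cases h : ∀ i, Finite (β i)
  · simp [ENat.card_eq_coe_natCard, Nat.card_sigma]
  · obtain ⟨i, hi⟩ : ∃ i, Infinite (β i) := by simpa [not_finite_iff_infinite] using h
    have : Infinite (Σ i, β i) := Infinite.of_injective (Sigma.mk i) sigma_mk_injective
    rw [ENat.card_eq_top_of_infinite, eq_comm, ENat.sum_eq_top]
    exact ⟨i, Finset.mem_univ i, ENat.card_eq_top_of_infinite⟩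

theorem enatCard_eq_sum_of_cons {α : Type*} {P : List α → Prop} {Q : α → List α → Prop}
    (A : Finset α) (hnil : ¬P []) (hcons : ∀ a w, P (a :: w) ↔ a ∈ A ∧ Q a w) :
    ENat.card {w // P w} = ∑ a ∈ A, ENat.card {w // Q a w} := by
  let e : {w // P w} ≃ Σ a : A, {w // Q a w} :=
    { toFun := fun
        | ⟨[], h⟩ => absurd h hnil
        | ⟨a :: w, h⟩ => ⟨⟨a, ((hcons a w).1 h).1⟩, ⟨w, ((hcons a w).1 h).2⟩⟩
      invFun := fun ⟨a, w⟩ => ⟨a.1 :: w.1, (hcons a w).2 ⟨a.2, w.2⟩⟩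
      left_inv := fun
        | ⟨[], h⟩ => absurd h hnil
        | ⟨_ :: _, _⟩ => rfl
      right_inv := fun _ => rfl }
  rw [ENat.card_congr e, enatCard_sigma, Finset.sum_coe_sort A fun a => ENat.card {w // Q a w}]

theorem enatCard_isCPermB_nil : ENat.card {w : List ℕ // IsCPermB [] w} = 1 := by
  have hw : ∀ w, IsCPermB [] w ↔ w = [] := fun
    | [] => by simp [IsCPermB]
    | s :: w => by simp [IsCPermB, AdmissibleB]
  simp [hw]

theorem not_isCPermB_nil {C : List (Finset ℕ)} (hC : C ≠ []) (hex : excess C = 0) :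
    ¬IsCPermB C [] := by
  intro h
  have : (C.map Finset.card).sum = 0 :=
    List.sum_eq_zero fun n hn => by
      obtain ⟨B, hB, rfl⟩ := List.mem_map.1 hn
      simp [h B hB]
  simp [excess, this, hC] at hex

theorem enatCard_isCPermB_eq_sum {C : List (Finset ℕ)} (hC : C ≠ []) (hex : excess C = 0) :
    ENat.card {w // IsCPermB C w} =
      ∑ s ∈ admissibleSet C, ENat.card {w // IsCPermB (deleteB C s) w} :=
  enatCard_eq_sum_of_cons _ (not_isCPermB_nil hC hex) fun _ _ => by
    rw [mem_admissibleSet]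
    rfl

theorem pow_card_add_sum_pow_mul_pow {α R : Type*} [LinearOrder α] [CommSemiring R]
    (B : Finset α) (x : R) :
    x ^ B.card + ∑ s ∈ B, x ^ (B.filter (· < s)).card * (x + 1) ^ (B.filter (s < ·)).card =
      (x + 1) ^ B.card := by
  induction B using Finset.induction_on_max with
  | empty => simp
  | insert a B hlt ih =>
    have ha : a ∉ B := fun h => (hlt a h).false
    have hterm : ∀ s ∈ B, x ^ ((insert a B).filter (· < s)).card *
        (x + 1) ^ ((insert a B).filter (s < ·)).card =
        (x + 1) * (x ^ (B.filter (· < s)).card * (x + 1) ^ (B.filter (s < ·)).card) := by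
      intro s hs
      have hsa := hlt s hs
      rw [Finset.filter_insert, Finset.filter_insert, if_neg hsa.not_gt, if_pos hsa,
        Finset.card_insert_of_notMem (by simp [ha])]
      ring
    have hlo : (insert a B).filter (· < a) = B := by
      rw [Finset.filter_insert, if_neg (lt_irrefl a)]
      exact Finset.filter_true_of_mem hlt
    have hhi : (insert a B).filter (a < ·) = ∅ := by
      rw [Finset.filter_insert, if_neg (lt_irrefl a)]
      exact Finset.filter_false_of_mem fun s hs => (hlt s hs).not_gt
    rw [Finset.sum_insert ha, Finset.sum_congr rfl hterm, ← Finset.mul_sum, hlo, hhi,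
      Finset.card_insert_of_notMem ha, Finset.card_empty, pow_zero, mul_one, pow_succ (x + 1), ← ih]
    ring

theorem weight_add_sum_weight_deleteB_mid {X Y : List (Finset ℕ)} {P B Y₀ : Finset ℕ}
    (hC : (X ++ P :: B :: Y₀ :: Y).Pairwise BlockLT) :
    weight (X ++ [P]) 1 * weight (B :: Y₀ :: Y) (X.length + 1) +
        ∑ s ∈ B, weight (deleteB (X ++ P :: B :: Y₀ :: Y) s) 1 =
      weight (X ++ [P, B]) 1 * weight (Y₀ :: Y) (X.length + 2) := by
  obtain ⟨hPB, -, hBY₀⟩ := blockLT_of_pairwise_mid hC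
  set c :=
    weight X 1 * (X.length + 1) ^ P.card * ((X.length + 2) ^ Y₀.card * weight Y (X.length + 3))
  have hterm : ∀ s ∈ B, weight (deleteB (X ++ P :: B :: Y₀ :: Y) s) 1 =
      c * ((X.length + 1) ^ (B.filter (· < s)).card *
        (X.length + 1 + 1) ^ (B.filter (s < ·)).card) := by
    intro s hs
    rw [deleteB_mid (notMem_of_pairwise_blockLT (X := X ++ [P]) (by simpa using hC) hs) hs,
      weight_append, weight_cons, weight_cons,
      Finset.card_union_of_disjoint (hPB.mono le_rfl (Finset.filter_subset _ _)).disjoint,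
      Finset.card_union_of_disjoint (hBY₀.mono (Finset.filter_subset _ _) le_rfl).disjoint]
    simp only [c, pow_add]
    ring_nf
  rw [Finset.sum_congr rfl hterm, ← Finset.mul_sum]
  calc _ = c * ((X.length + 1) ^ B.card + ∑ s ∈ B,
          (X.length + 1) ^ (B.filter (· < s)).card *
            (X.length + 1 + 1) ^ (B.filter (s < ·)).card) := by
        simp only [c, weight_append, weight_cons, weight_nil]
        ring
    _ = _ := by
        rw [pow_card_add_sum_pow_mul_pow]
        simp only [c, weight_append, weight_cons, weight_nil]
        ring

theorem weight_add_sum_weight_deleteB_last {X : List (Finset ℕ)} {P B : Finset ℕ}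
    (hC : (X ++ [P, B]).Pairwise BlockLT) (hB : B.card ≤ 1) :
    weight (X ++ [P]) 1 * weight [B] (X.length + 1) +
        ∑ s ∈ B, weight (deleteB (X ++ [P, B]) s) 1 =
      weight (X ++ [P, B]) 1 * weight [] (X.length + 2) := by
  obtain ⟨s, hBs⟩ := Finset.card_le_one_iff_subset_singleton.1 hB
  rcases Finset.subset_singleton_iff.1 hBs with rfl | rfl
  · simp [weight_append]
  · rw [Finset.sum_singleton, deleteB_last (notMem_of_pairwise_blockLT (X := X ++ [P])
      (by simpa using hC) (Finset.mem_singleton_self s)) (Finset.mem_singleton_self s)]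
    simp only [weight_append, weight_cons, weight_nil, mul_one, Finset.card_singleton, pow_one,
      Finset.erase_singleton, Finset.union_empty]
    ring

-- `weight Z 1 * weight Y Z.length` is `T_{|Z|}`: the blocks of `Y` count one below their position.
theorem weight_add_sum_weight_deleteB {C : List (Finset ℕ)} (hC : C.Pairwise BlockLT)
    (hsup : ∀ V, V <:+ C → excess V ≤ 0) {Z Y : List (Finset ℕ)} (hZY : C = Z ++ Y)
    (hZ : Z ≠ []) :
    weight Z 1 * weight Y Z.length + (Y.map fun B => ∑ s ∈ B, weight (deleteB C s) 1).sum =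
      weight C 1 := by
  induction Y generalizing Z with
  | nil => simp [hZY]
  | cons B Y ih =>
    obtain ⟨X, P, rfl⟩ : ∃ X P, Z = X ++ [P] :=
      ⟨_, _, (List.dropLast_append_getLast hZ).symm⟩
    have hstep : weight (X ++ [P]) 1 * weight (B :: Y) (X.length + 1) +
        ∑ s ∈ B, weight (deleteB C s) 1 = weight (X ++ [P, B]) 1 * weight Y (X.length + 2) := by
      subst hZY
      rcases Y with _ | ⟨Y₀, Y⟩
      · have hB := hsup [B] (List.suffix_append _ _)
        simp only [excess_cons, excess_nil, add_zero, sub_nonpos, Nat.cast_le_one] at hB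
        simpa using weight_add_sum_weight_deleteB_last (by simpa using hC) hB
      · simpa using weight_add_sum_weight_deleteB_mid (by simpa using hC)
    rw [List.map_cons, List.sum_cons, ← add_assoc, List.length_append, List.length_singleton,
      hstep]
    simpa using ih (Z := X ++ [P, B]) (by simp [hZY]) (by simp)

theorem sum_admissibleSet_weight_deleteB {B₀ : Finset ℕ} {T : List (Finset ℕ)}
    (hC : (B₀ :: T).Pairwise BlockLT) (hsup : ∀ V, V <:+ B₀ :: T → excess V ≤ 0)
    (hB₀ : B₀.Nonempty) :
    ∑ s ∈ admissibleSet (B₀ :: T), weight (deleteB (B₀ :: T) s) 1 = weight (B₀ :: T) 1 := by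
  set m := B₀.min' hB₀
  have hm : m ∈ B₀ := B₀.min'_mem hB₀
  have hmin : B₀.filter (fun s => ∀ t ∈ B₀, s ≤ t) = {m} := by
    ext s
    simp only [Finset.mem_filter, Finset.mem_singleton]
    exact ⟨fun h => le_antisymm (h.2 m hm) (B₀.min'_le s h.1),
      fun h => h ▸ ⟨hm, fun t ht => B₀.min'_le t ht⟩⟩
  have hdisj : Disjoint {m} (support T) := Finset.disjoint_singleton_left.2 fun hmT => by
    obtain ⟨B, hB, hmB⟩ := mem_support.1 hmT
    exact (List.rel_of_pairwise_cons hC hB m hm m hmB).false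
  have hdel : weight (deleteB (B₀ :: T) m) 1 = weight T 1 := by
    rcases T with _ | ⟨Y₀, Y⟩
    · rw [deleteB_singleton hm]
    · rw [deleteB_cons_cons hm fun t ht => B₀.min'_le t ht]
      simp
  rw [admissibleSet, hmin, Finset.sum_union hdisj, Finset.sum_singleton, hdel,
    sum_support ((List.pairwise_cons.1 hC).2.imp BlockLT.disjoint)]
  simpa using weight_add_sum_weight_deleteB hC hsup (Z := [B₀]) rfl (List.cons_ne_nil _ _)

theorem enatCard_isCPermB_of_suffix_excess_nonpos (C : List (Finset ℕ))
    (hC : C.Pairwise BlockLT) (hex : excess C = 0) (hsup : ∀ V, V <:+ C → excess V ≤ 0) :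
    ENat.card {w // IsCPermB C w} = weight C 1 := by
  induction hlen : C.length generalizing C with
  | zero => simp [List.length_eq_zero_iff.1 hlen, enatCard_isCPermB_nil]
  | succ n ih =>
    obtain ⟨B₀, T, rfl⟩ := List.exists_cons_of_length_eq_add_one hlen
    have hB₀ : B₀.Nonempty := by
      have := hsup T (List.suffix_cons _ _)
      rw [excess_cons] at hex
      exact Finset.card_pos.1 (by omega)
    have hdel : ∀ s ∈ admissibleSet (B₀ :: T),
        ENat.card {w // IsCPermB (deleteB (B₀ :: T) s) w} = weight (deleteB (B₀ :: T) s) 1 := by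
      intro s hs
      have h := mergesInto_deleteB hC hex hs
      refine ih _ (h.pairwise hC) (h.excess_eq.trans hex) (fun V hV => ?_) (by
        have := h.length_add_one
        omega)
      obtain ⟨U, -, hU, -, -, hle⟩ := h.exists_suffix_excess_bounds hV
      exact hle.trans (hsup U hU)
    rw [enatCard_isCPermB_eq_sum (List.cons_ne_nil _ _) hex, Finset.sum_congr rfl hdel,
      ← Nat.cast_sum, sum_admissibleSet_weight_deleteB hC hsup hB₀]

theorem card_admissibleSet_of_card_le_one {B₀ : Finset ℕ} {T : List (Finset ℕ)}
    (hC : (B₀ :: T).Pairwise BlockLT) (hB₀ : B₀.card ≤ 1) :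
    (admissibleSet (B₀ :: T)).card = ((B₀ :: T).map Finset.card).sum := by
  have hmin : B₀.filter (fun s => ∀ t ∈ B₀, s ≤ t) = B₀ :=
    Finset.filter_true_of_mem fun s hs t ht => (Finset.card_le_one.1 hB₀ s hs t ht).le
  rw [admissibleSet, hmin, ← support_cons, card_support (hC.imp BlockLT.disjoint)]

theorem enatCard_isCPermB_of_suffix_excess_nonneg (C : List (Finset ℕ))
    (hC : C.Pairwise BlockLT) (hex : excess C = 0) (hsub : ∀ V, V <:+ C → 0 ≤ excess V) :
    ENat.card {w // IsCPermB C w} = C.length ! := by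
  induction hlen : C.length generalizing C with
  | zero => simp [List.length_eq_zero_iff.1 hlen, enatCard_isCPermB_nil]
  | succ n ih =>
    obtain ⟨B₀, T, rfl⟩ := List.exists_cons_of_length_eq_add_one hlen
    have hB₀ : B₀.card ≤ 1 := by
      have := hsub T (List.suffix_cons _ _)
      rw [excess_cons] at hex
      omega
    have hdel : ∀ s ∈ admissibleSet (B₀ :: T),
        ENat.card {w // IsCPermB (deleteB (B₀ :: T) s) w} = n ! := by
      intro s hs
      have h := mergesInto_deleteB hC hex hs
      refine ih _ (h.pairwise hC) (h.excess_eq.trans hex) (fun V hV => ?_) (by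
        have := h.length_add_one
        omega)
      obtain ⟨-, U', -, hU', hle, -⟩ := h.exists_suffix_excess_bounds hV
      exact (hsub U' hU').trans hle
    have hcard : (admissibleSet (B₀ :: T)).card = n + 1 := by
      rw [card_admissibleSet_of_card_le_one hC hB₀]
      simp only [excess, sub_eq_zero] at hex
      omega
    rw [enatCard_isCPermB_eq_sum (List.cons_ne_nil _ _) hex, Finset.sum_congr rfl hdel,
      Finset.sum_const, hcard, nsmul_eq_mul, Nat.factorial_succ, Nat.cast_mul]

theorem pairwise_blockLT_of_isDivision {C : List (Finset ℕ)} {S : Finset ℕ}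
    (h : IsDivision C S) : C.Pairwise BlockLT :=
  List.pairwise_iff_getElem.2 fun i j hi hj hij => by
    have := h.2.2 i j hij hj
    rwa [List.getD_eq_getElem _ _ hi, List.getD_eq_getElem _ _ hj] at this

theorem support_eq_of_isDivision {C : List (Finset ℕ)} {S : Finset ℕ} (h : IsDivision C S) :
    support C = S := by
  ext x
  rw [mem_support]
  constructor
  · rintro ⟨B, hB, hx⟩
    obtain ⟨i, hi, rfl⟩ := List.getElem_of_mem hB
    exact h.2.1 i hi (by rwa [List.getD_eq_getElem _ _ hi])
  · intro hx
    obtain ⟨i, hi, hxi⟩ := h.1 x hx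
    exact ⟨C[i], List.getElem_mem hi, by rwa [List.getD_eq_getElem _ _ hi] at hxi⟩

theorem excess_eq_zero_of_isDivision {C : List (Finset ℕ)} {S : Finset ℕ} (h : IsDivision C S)
    (hlen : C.length = S.card) : excess C = 0 := by
  have := card_support ((pairwise_blockLT_of_isDivision h).imp BlockLT.disjoint)
  rw [support_eq_of_isDivision h] at this
  simp [excess, ← this, hlen]

theorem natCard_eq_of_enatCard_eq {α : Type*} {n : ℕ} (h : ENat.card α = n) : Nat.card α = n := by
  have : Finite α := ENat.card_lt_top.1 (h ▸ ENat.natCast_lt_top n)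
  exact_mod_cast (ENat.card_eq_coe_natCard α).symm.trans h

/-- if `C` is superdiagonal, the number of type B `C`-permutations is
`1^{|C₁|} 2^{|C₂|} ⋯ n^{|C_n|}`; if `C` is subdiagonal, it is `n!`. -/
theorem cpermB_diagonal (n : ℕ) (S : Finset ℕ) (C : List (Finset ℕ))
    (hS : S.card = n) (hlen : C.length = n) (hC : IsDivision C S) :
    (Superdiagonal C →
      Nat.card {w : List ℕ // IsCPermB C w} =
        ∏ i ∈ Finset.range n, (i + 1) ^ (C.getD i ∅).card) ∧
    (Subdiagonal C → Nat.card {w : List ℕ // IsCPermB C w} = n !) := by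
  have hord := pairwise_blockLT_of_isDivision hC
  have hex := excess_eq_zero_of_isDivision hC (hlen.trans hS.symm)
  refine ⟨fun hsup => ?_, fun hsub => ?_⟩
  · rw [natCard_eq_of_enatCard_eq (enatCard_isCPermB_of_suffix_excess_nonpos C hord hex
      (excess_suffix_nonpos_of_superdiagonal hex hsup)), weight_eq_prod, hlen]
    simp_rw [add_comm 1]
  · rw [natCard_eq_of_enatCard_eq (enatCard_isCPermB_of_suffix_excess_nonneg C hord hex
      (subdiagonal_iff.1 hsub)), hlen]

end MixedEulerian
end
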